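/- arXiv:2410.00177 — 14 statements merged into one kernel-verified Lean document; each statement's English description precedes it below -/
import Mathlib

section
/- Let f(x,y) = Ax² + Bxy + Cy² be an integral binary quadratic form with discriminant Δ = B² − 4AC ≠ 0, and let m > 1 be an integer with gcd(m, 2Δ) = 1. Suppose Δ is a square modulo m, i.e. there is an integer v with v² ≡ Δ (mod m). Then for every integer ℓ there exist coprime integers x, y (gcd(x,y) = 1) with f(x,y) ≡ ℓ (mod m). -/
/-!
Flipping the sign of the given square root `v` of `Δ` on the primes of `m` that divide `B - v`
yields a square root `s` of `Δ` modulo `m` with `B + s` a unit modulo `m`. Then the rationalised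
quadratic formula `x ≡ -2C / (B + s)` gives a root of `f(·, 1)` modulo `m`, and
`f(xt + 1, t) = f(x, 1) t² + (2Ax + B) t + A`, where `(2Ax + B)² ≡ Δ` is a unit modulo `m`.
So `t` can be chosen with `f(xt + 1, t) ≡ ℓ`, and `(xt + 1, t)` is primitive.
-/

theorem Int.exists_mul_eq_isCoprime_forall_prime_dvd (g : ℤ) {m : ℤ} (hm : m ≠ 0) :
    ∃ m₁ m₂, m₁ * m₂ = m ∧ IsCoprime m₁ g ∧ ∀ p, Prime p → p ∣ m₂ → p ∣ g := by
  induction hn : m.natAbs using Nat.strong_induction_on generalizing m with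
  | _ n ih =>
    by_cases hmg : IsCoprime m g
    · exact ⟨m, 1, mul_one m, hmg, fun p hp h => absurd h hp.not_dvd_one⟩
    have hc : 1 < Int.gcd m g := by
      have := Int.gcd_pos_of_ne_zero_left g hm
      have : Int.gcd m g ≠ 1 := fun h => hmg (Int.isCoprime_iff_gcd_eq_one.mpr h)
      omega
    obtain ⟨m', hm_eq⟩ := Int.gcd_dvd_left (a := m) (b := g)
    have hm'₀ : m' ≠ 0 := right_ne_zero_of_mul (hm_eq ▸ hm)
    have hlt : m'.natAbs < n := by
      rw [← hn, hm_eq, Int.natAbs_mul, Int.natAbs_natCast]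
      exact lt_mul_left (Int.natAbs_pos.mpr hm'₀) hc
    obtain ⟨a, b, hab, ha, hb⟩ := ih _ hlt hm'₀ rfl
    refine ⟨a, Int.gcd m g * b, ?_, ha, fun p hp h => ?_⟩
    · rw [← hab] at hm_eq
      linear_combination -hm_eq
    rcases hp.dvd_or_dvd h with h | h
    · exact h.trans (Int.gcd_dvd_right m g)
    · exact hb p hp h

theorem Int.isCoprime_add_of_forall_prime_dvd_sub {n D v B : ℤ} (hn : n ≠ 0)
    (hcop : IsCoprime n (2 * D)) (hv : v ^ 2 ≡ D [ZMOD n])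
    (hBv : ∀ p, Prime p → p ∣ n → p ∣ B - v) : IsCoprime n (B + v) := by
  refine isCoprime_of_prime_dvd (by simp [hn]) fun p hp hpn hpBv => ?_
  have hp2v : p ∣ 2 * v := by simpa [two_mul] using dvd_sub hpBv (hBv p hp hpn)
  have hp4D : p ∣ 2 * (2 * D) := by
    rw [show 2 * (2 * D) = 4 * (D - v ^ 2) + 2 * v * (2 * v) by ring]
    exact dvd_add ((hpn.trans hv.dvd).mul_left 4) (hp2v.mul_right (2 * v))
  have hp2D : p ∣ 2 * D := (hp.dvd_or_dvd hp4D).elim (·.mul_right D) id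
  exact hp.not_isUnit (hcop.isUnit_of_dvd' hpn hp2D)

theorem Int.exists_sq_modEq_isCoprime_add {m D v : ℤ} (B : ℤ) (hcop : IsCoprime m (2 * D))
    (hv : v ^ 2 ≡ D [ZMOD m]) : ∃ s, s ^ 2 ≡ D [ZMOD m] ∧ IsCoprime m (B + s) := by
  have hm : m ≠ 0 := by
    rintro rfl
    rcases Int.isUnit_iff.mp (isCoprime_zero_left.mp hcop) with h | h <;> omega
  obtain ⟨m₁, m₂, rfl, h₁, h₂⟩ := Int.exists_mul_eq_isCoprime_forall_prime_dvd (B - v) hm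
  have h₂' : IsCoprime m₂ (B + v) :=
    Int.isCoprime_add_of_forall_prime_dvd_sub (right_ne_zero_of_mul hm)
      hcop.of_mul_left_right (Int.ModEq.of_mul_left m₁ hv) h₂
  obtain ⟨u, w, huw⟩ : IsCoprime m₁ m₂ := isCoprime_of_prime_dvd
    (by simp [left_ne_zero_of_mul hm])
    fun p hp hp₁ hp₂ => hp.not_isUnit (h₁.isUnit_of_dvd' hp₁ (h₂ p hp hp₂))
  -- `s ≡ -v` modulo `m₁` and `s ≡ v` modulo `m₂`
  refine ⟨v * (u * m₁ - w * m₂), ?_, IsCoprime.mul_left ?_ ?_⟩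
  · have : (v * (u * m₁ - w * m₂)) ^ 2 = v ^ 2 + m₁ * m₂ * (-4 * u * w * v ^ 2) := by
      linear_combination (v ^ 2 * (u * m₁ + w * m₂ + 1)) * huw
    rw [this]
    exact Int.modEq_add_fac_self.trans hv
  · have : B + v * (u * m₁ - w * m₂) = B - v + m₁ * (2 * v * u) := by
      linear_combination -v * huw
    rw [this]
    exact h₁.add_mul_left_right _
  · have : B + v * (u * m₁ - w * m₂) = B + v + m₂ * (-2 * v * w) := by
      linear_combination v * huw
    rw [this]
    exact h₂'.add_mul_left_right _

theorem exists_modEq_zero_of_isCoprime_add {A B C m s : ℤ}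
    (hs : s ^ 2 ≡ B ^ 2 - 4 * A * C [ZMOD m]) (hBs : IsCoprime m (B + s)) :
    ∃ x, A * x ^ 2 + B * x + C ≡ 0 [ZMOD m] := by
  obtain ⟨u, w, huw⟩ := hBs
  have hw : w * (B + s) ≡ 1 [ZMOD m] := Int.modEq_iff_dvd.mpr ⟨u, by linear_combination -huw⟩
  have hroot : (B + s) ^ 2 * (A * (-2 * C * w) ^ 2 + B * (-2 * C * w) + C) ≡ 0 [ZMOD m] :=
    calc (B + s) ^ 2 * (A * (-2 * C * w) ^ 2 + B * (-2 * C * w) + C)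
        = A * (-2 * C * (w * (B + s))) ^ 2 + B * (-2 * C * (w * (B + s))) * (B + s)
          + C * (B + s) ^ 2 := by ring
      _ ≡ A * (-2 * C * 1) ^ 2 + B * (-2 * C * 1) * (B + s) + C * (B + s) ^ 2 [ZMOD m] := by
          gcongr
      _ = C * (s ^ 2 - (B ^ 2 - 4 * A * C)) := by ring
      _ ≡ C * ((B ^ 2 - 4 * A * C) - (B ^ 2 - 4 * A * C)) [ZMOD m] := by gcongr
      _ = 0 := by ring
  refine ⟨-2 * C * w, Int.modEq_zero_iff_dvd.mpr ?_⟩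
  exact (IsCoprime.pow_right ⟨u, w, huw⟩).dvd_of_dvd_mul_left (Int.modEq_zero_iff_dvd.mp hroot)

theorem exists_primitive_modEq_of_root {A B C m r : ℤ} (hΔ : IsCoprime m (B ^ 2 - 4 * A * C))
    (hr : A * r ^ 2 + B * r + C ≡ 0 [ZMOD m]) (ℓ : ℤ) :
    ∃ x y : ℤ, Int.gcd x y = 1 ∧ A * x ^ 2 + B * x * y + C * y ^ 2 ≡ ℓ [ZMOD m] := by
  have hb : IsCoprime m (2 * A * r + B) := by
    rw [← IsCoprime.pow_right_iff two_pos]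
    obtain ⟨k, hk⟩ := hr.symm.dvd
    have : (2 * A * r + B) ^ 2 = B ^ 2 - 4 * A * C + m * (4 * A * k) := by
      linear_combination 4 * A * hk
    rw [this]
    exact hΔ.add_mul_left_right _
  obtain ⟨u, w, huw⟩ := hb
  set t := w * (ℓ - A)
  refine ⟨r * t + 1, t, Int.isCoprime_iff_gcd_eq_one.mp ⟨1, -r, by ring⟩, ?_⟩
  have hw : (2 * A * r + B) * w ≡ 1 [ZMOD m] :=
    Int.modEq_iff_dvd.mpr ⟨u, by linear_combination -huw⟩
  calc A * (r * t + 1) ^ 2 + B * (r * t + 1) * t + C * t ^ 2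
      = (A * r ^ 2 + B * r + C) * t ^ 2 + (2 * A * r + B) * w * (ℓ - A) + A := by ring
    _ ≡ 0 * t ^ 2 + 1 * (ℓ - A) + A [ZMOD m] := by gcongr
    _ = ℓ := by ring

theorem stmt_0_general (A B C : ℤ)
    (m : ℤ) (hcop : Int.gcd m (2 * (B ^ 2 - 4 * A * C)) = 1)
    (hsq : ∃ v : ℤ, v ^ 2 ≡ B ^ 2 - 4 * A * C [ZMOD m]) :
    ∀ ℓ : ℤ, ∃ x y : ℤ, Int.gcd x y = 1 ∧
      A * x ^ 2 + B * x * y + C * y ^ 2 ≡ ℓ [ZMOD m] := by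
  have h2Δ := Int.isCoprime_iff_gcd_eq_one.mpr hcop
  obtain ⟨v, hv⟩ := hsq
  obtain ⟨s, hs, hBs⟩ := Int.exists_sq_modEq_isCoprime_add B h2Δ hv
  obtain ⟨r, hr⟩ := exists_modEq_zero_of_isCoprime_add hs hBs
  exact exists_primitive_modEq_of_root h2Δ.of_mul_right_right hr

/-- If the discriminant of an integral binary quadratic form is a nonzero
square modulo `m`, with `gcd(m, 2Δ) = 1`, then every residue class mod `m` is attained
primitively by the form. -/
theorem stmt_0 (A B C : ℤ) (hΔ : B ^ 2 - 4 * A * C ≠ 0)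
    (m : ℤ) (hm : 1 < m) (hcop : Int.gcd m (2 * (B ^ 2 - 4 * A * C)) = 1)
    (hsq : ∃ v : ℤ, v ^ 2 ≡ B ^ 2 - 4 * A * C [ZMOD m]) :
    ∀ ℓ : ℤ, ∃ x y : ℤ, Int.gcd x y = 1 ∧
      A * x ^ 2 + B * x * y + C * y ^ 2 ≡ ℓ [ZMOD m] :=
  stmt_0_general A B C m hcop hsq
end

section
/- Let f(x,y) = Ax² + Bxy + Cy² be any integral binary quadratic form, let m ≥ 1 be an integer and ℓ ∈ ℤ. If there exist integers x₀, y₀ with gcd(gcd(x₀,y₀), m) = 1 and f(x₀,y₀) ≡ ℓ (mod m), then there exist coprime integers x, y (gcd(x,y) = 1) with f(x,y) ≡ ℓ (mod m). -/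
/-! Write `x₀ = g a`, `y₀ = g c` with `g = gcd(x₀, y₀)` and `a, c` coprime. Since `g` is a unit
mod `m`, the pair `(g a - v m, g c + u m)`, where `a u + c v = 1`, is coprime and congruent to
`(x₀, y₀)` mod `m`, so it represents the same residue class. -/

theorem Int.exists_isCoprime_eq_gcd_mul (x y : ℤ) :
    ∃ a c : ℤ, IsCoprime a c ∧ x = Int.gcd x y * a ∧ y = Int.gcd x y * c := by
  rcases Nat.eq_zero_or_pos (Int.gcd x y) with hg | hg
  · obtain ⟨rfl, rfl⟩ := Int.gcd_eq_zero_iff.mp hg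
    exact ⟨1, 0, isCoprime_one_left, by simp, by simp⟩
  · obtain ⟨a, c, hac, hx, hy⟩ := Int.exists_gcd_one hg
    exact ⟨a, c, Int.isCoprime_iff_gcd_eq_one.mpr hac, hx.trans (mul_comm _ _),
      hy.trans (mul_comm _ _)⟩

theorem Int.exists_isCoprime_modEq_of_isCoprime_gcd {x₀ y₀ m : ℤ}
    (h : IsCoprime (Int.gcd x₀ y₀ : ℤ) m) :
    ∃ x y : ℤ, IsCoprime x y ∧ x ≡ x₀ [ZMOD m] ∧ y ≡ y₀ [ZMOD m] := by
  set g : ℤ := (Int.gcd x₀ y₀ : ℤ)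
  obtain ⟨a, c, ⟨u, v, huv⟩, hx, hy⟩ := Int.exists_isCoprime_eq_gcd_mul x₀ y₀
  obtain ⟨p, q, hpq⟩ := h
  refine ⟨g * a - v * m, g * c + u * m, ⟨p * u - q * c, p * v + q * a, ?_⟩, ?_, ?_⟩
  · linear_combination (p * g + q * m) * huv + hpq
  · exact Int.modEq_iff_dvd.mpr ⟨v, by rw [hx]; ring⟩
  · exact Int.modEq_iff_dvd.mpr ⟨-u, by rw [hy]; ring⟩

theorem stmt_2_general (A B C : ℤ) (m : ℤ) (ℓ : ℤ)
    (h : ∃ x₀ y₀ : ℤ, Int.gcd (↑(Int.gcd x₀ y₀) : ℤ) m = 1 ∧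
      A * x₀ ^ 2 + B * x₀ * y₀ + C * y₀ ^ 2 ≡ ℓ [ZMOD m]) :
    ∃ x y : ℤ, Int.gcd x y = 1 ∧ A * x ^ 2 + B * x * y + C * y ^ 2 ≡ ℓ [ZMOD m] := by
  obtain ⟨x₀, y₀, hgm, hrep⟩ := h
  obtain ⟨x, y, hxy, hx, hy⟩ :=
    Int.exists_isCoprime_modEq_of_isCoprime_gcd (Int.isCoprime_iff_gcd_eq_one.mpr hgm)
  refine ⟨x, y, Int.isCoprime_iff_gcd_eq_one.mp hxy, Int.ModEq.trans ?_ hrep⟩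
  gcongr

/-- If a residue class mod `m` is represented by a binary quadratic form
at a pair `(x₀,y₀)` with `gcd(gcd(x₀,y₀),m)=1`, then it is represented at a coprime pair. -/
theorem stmt_2 (A B C : ℤ) (m : ℤ) (hm : 1 ≤ m) (ℓ : ℤ)
    (h : ∃ x₀ y₀ : ℤ, Int.gcd (↑(Int.gcd x₀ y₀) : ℤ) m = 1 ∧
      A * x₀ ^ 2 + B * x₀ * y₀ + C * y₀ ^ 2 ≡ ℓ [ZMOD m]) :
    ∃ x y : ℤ, Int.gcd x y = 1 ∧ A * x ^ 2 + B * x * y + C * y ^ 2 ≡ ℓ [ZMOD m] :=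
  stmt_2_general A B C m ℓ h
end

section
/- Let p be an odd prime and let (a,b,c,d) be a Descartes quadruple with p ∣ a and p ∣ b. Then c ≡ d (mod p), and the pinch polynomial satisfies f(x) ≡ c (mod p) for every integer x. -/
/-!
Modulo `p` the Descartes equation rearranges to `(c - d)² ≡ 0`, so `c ≡ d`. The pinch polynomial
can be written `f(x) = (a + b)(x² - x) - (c - d)x + c`, and both coefficients `a + b` and `c - d`
then vanish modulo `p`.
-/

namespace Descartes

variable {R : Type*} [CommRing R] {a b c d : R}

theorem sq_sub_eq (h : 2 * (a ^ 2 + b ^ 2 + c ^ 2 + d ^ 2) = (a + b + c + d) ^ 2) :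
    (c - d) ^ 2 = (a + b) * (a + b + 2 * c + 2 * d) - 2 * a ^ 2 - 2 * b ^ 2 := by
  linear_combination h

theorem dvd_sub_of_dvd_of_dvd {p : R} (hp : Prime p)
    (h : 2 * (a ^ 2 + b ^ 2 + c ^ 2 + d ^ 2) = (a + b + c + d) ^ 2) (ha : p ∣ a) (hb : p ∣ b) :
    p ∣ c - d := by
  refine hp.dvd_of_dvd_pow (n := 2) ?_
  rw [sq_sub_eq h]
  exact (((dvd_add ha hb).mul_right _).sub ((dvd_pow ha two_ne_zero).mul_left 2)).sub
    ((dvd_pow hb two_ne_zero).mul_left 2)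

theorem pinch_sub_const_dvd {p : R} (hab : p ∣ a + b) (hcd : p ∣ c - d) (x : R) :
    p ∣ (a + b) * x ^ 2 - (a + b + c - d) * x + c - c := by
  have hpinch : (a + b) * x ^ 2 - (a + b + c - d) * x + c - c =
      (a + b) * (x ^ 2 - x) - (c - d) * x := by
    ring
  rw [hpinch]
  exact (hab.mul_right _).sub (hcd.mul_right _)

end Descartes

theorem stmt_4_general (p : ℕ) (hp : p.Prime) (a b c d : ℤ)
    (hDesc : 2 * (a ^ 2 + b ^ 2 + c ^ 2 + d ^ 2) = (a + b + c + d) ^ 2)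
    (ha : (p : ℤ) ∣ a) (hb : (p : ℤ) ∣ b) :
    c ≡ d [ZMOD (p : ℤ)] ∧
      ∀ x : ℤ, (a + b) * x ^ 2 - (a + b + c - d) * x + c ≡ c [ZMOD (p : ℤ)] := by
  have hcd : (p : ℤ) ∣ c - d :=
    Descartes.dvd_sub_of_dvd_of_dvd (Nat.prime_iff_prime_int.mp hp) hDesc ha hb
  refine ⟨(Int.modEq_iff_dvd.mpr hcd).symm, fun x => ?_⟩
  exact (Int.modEq_iff_dvd.mpr (Descartes.pinch_sub_const_dvd (dvd_add ha hb) hcd x)).symm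

/-- if an odd prime `p` divides both `a` and `b` in a Descartes quadruple,
then `c ≡ d (mod p)` and the pinch polynomial is constantly `c` modulo `p`. -/
theorem stmt_4 (p : ℕ) (hp : p.Prime) (hodd : Odd p) (a b c d : ℤ)
    (hDesc : 2 * (a ^ 2 + b ^ 2 + c ^ 2 + d ^ 2) = (a + b + c + d) ^ 2)
    (ha : (p : ℤ) ∣ a) (hb : (p : ℤ) ∣ b) :
    c ≡ d [ZMOD (p : ℤ)] ∧
      ∀ x : ℤ, (a + b) * x ^ 2 - (a + b + c - d) * x + c ≡ c [ZMOD (p : ℤ)] :=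
  stmt_4_general p hp a b c d hDesc ha hb
end

section
/- Let p be an odd prime, n ≥ 1, and m = pⁿ. Let (a,b,c,d) be a Descartes quadruple such that p ∣ a+b but not both p ∣ a and p ∣ b. Then the pinch polynomial f(x) = (a+b)x² − (a+b+c−d)x + c is surjective modulo m: for every integer ℓ there exists an integer x with f(x) ≡ ℓ (mod m). -/
/-! The linear coefficient `u = a + b + c - d` of the pinch polynomial is prime to `p`:
otherwise `p ∣ c - d`, and the Descartes relation `2(a + b)(c + d) = (a - b)² + (c - d)²`
forces `p ∣ a - b`, hence `p ∣ a` and `p ∣ b` since `p` is odd. Modulo `pⁿ` the leading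
coefficient `a + b` is then nilpotent and `u` a unit, so `f(x) - f(y) = (x - y)((a + b)(x + y) - u)`
vanishes only for `x = y`; an injective self-map of the finite ring `ℤ/pⁿ` is surjective. -/

theorem descartes_sub_sq_add_sub_sq {R : Type*} [CommRing R] {a b c d : R}
    (h : 2 * (a ^ 2 + b ^ 2 + c ^ 2 + d ^ 2) = (a + b + c + d) ^ 2) :
    (a - b) ^ 2 + (c - d) ^ 2 = 2 * (a + b) * (c + d) := by
  linear_combination h

theorem not_dvd_add_add_sub_of_descartes {p a b c d : ℤ} (hp : Prime p) (hp2 : ¬ p ∣ 2)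
    (hDesc : 2 * (a ^ 2 + b ^ 2 + c ^ 2 + d ^ 2) = (a + b + c + d) ^ 2)
    (hab : p ∣ a + b) (hnot : ¬ (p ∣ a ∧ p ∣ b)) :
    ¬ p ∣ a + b + c - d := by
  intro hu
  have hcd : p ∣ c - d := by simpa [add_sub_assoc] using dvd_sub hu hab
  have hsq : p ∣ (a - b) ^ 2 := by
    have h := dvd_sub (dvd_mul_of_dvd_left (dvd_mul_of_dvd_right hab 2) (c + d))
      (dvd_pow hcd two_ne_zero)
    rwa [← descartes_sub_sq_add_sub_sq hDesc, add_sub_cancel_right] at h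
  have hsub : p ∣ a - b := hp.dvd_of_dvd_pow hsq
  have h2a : p ∣ 2 * a := by simpa [two_mul] using dvd_add hab hsub
  have h2b : p ∣ 2 * b := by simpa [two_mul] using dvd_sub hab hsub
  exact hnot ⟨(hp.dvd_mul.mp h2a).resolve_left hp2, (hp.dvd_mul.mp h2b).resolve_left hp2⟩

theorem bijective_quadratic_of_isNilpotent_of_isUnit {R : Type*} [CommRing R] [Finite R]
    {A B : R} (hA : IsNilpotent A) (hB : IsUnit B) (C : R) :
    Function.Bijective fun x : R => A * x ^ 2 - B * x + C := by
  refine Finite.injective_iff_bijective.mp fun x y hxy => ?_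
  have hfac : (x - y) * (A * (x + y) - B) = 0 := by
    linear_combination (hxy : A * x ^ 2 - B * x + C = A * y ^ 2 - B * y + C)
  have hunit : IsUnit (A * (x + y) - B) := by
    rw [sub_eq_neg_add]
    exact ((Commute.all _ _).isNilpotent_mul_right hA).isUnit_add_left_of_commute hB.neg
      (Commute.all _ _)
  exact sub_eq_zero.mp (hunit.mul_left_eq_zero.mp hfac)

namespace ZMod

variable {p : ℕ} {z : ℤ}

theorem isNilpotent_intCast_of_dvd (n : ℕ) (h : (p : ℤ) ∣ z) :
    IsNilpotent (z : ZMod (p ^ n)) := by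
  obtain ⟨k, rfl⟩ := h
  push_cast
  refine (Commute.all _ _).isNilpotent_mul_right ⟨n, ?_⟩
  exact_mod_cast ZMod.natCast_self (p ^ n)

theorem isUnit_intCast_of_not_dvd (hp : Prime (p : ℤ)) (n : ℕ) (h : ¬ (p : ℤ) ∣ z) :
    IsUnit (z : ZMod (p ^ n)) := by
  rw [ZMod.coe_int_isUnit_iff_isCoprime, Nat.cast_pow]
  exact (hp.coprime_iff_not_dvd.mpr h).pow_left

end ZMod

theorem stmt_5_general (p : ℕ) (hp : p.Prime) (hodd : Odd p) (n : ℕ)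
    (a b c d : ℤ)
    (hDesc : 2 * (a ^ 2 + b ^ 2 + c ^ 2 + d ^ 2) = (a + b + c + d) ^ 2)
    (hab : (p : ℤ) ∣ (a + b)) (hnot : ¬ ((p : ℤ) ∣ a ∧ (p : ℤ) ∣ b)) :
    ∀ ℓ : ℤ, ∃ x : ℤ,
      (a + b) * x ^ 2 - (a + b + c - d) * x + c ≡ ℓ [ZMOD ((p : ℤ) ^ n)] := by
  have hpZ : Prime (p : ℤ) := Nat.prime_iff_prime_int.mp hp
  have hp2 : ¬ (p : ℤ) ∣ 2 := by
    exact_mod_cast fun h => hodd.not_two_dvd_nat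
      (by rw [(Nat.prime_dvd_prime_iff_eq hp Nat.prime_two).mp h])
  have hu := not_dvd_add_add_sub_of_descartes hpZ hp2 hDesc hab hnot
  have : NeZero (p ^ n) := ⟨pow_ne_zero n hp.ne_zero⟩
  have hbij := bijective_quadratic_of_isNilpotent_of_isUnit (ZMod.isNilpotent_intCast_of_dvd n hab)
    (ZMod.isUnit_intCast_of_not_dvd hpZ n hu) (c : ZMod (p ^ n))
  intro ℓ
  obtain ⟨y, hy⟩ := hbij.surjective (ℓ : ZMod (p ^ n))
  obtain ⟨x, rfl⟩ := ZMod.intCast_surjective y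
  refine ⟨x, ?_⟩
  rw [← Nat.cast_pow, ← ZMod.intCast_eq_intCast_iff, ← hy]
  push_cast
  ring

/-- if `p ∣ a+b` but not both of `a,b`, the pinch polynomial of a Descartes
quadruple is surjective modulo `m = pⁿ`. -/
theorem stmt_5 (p : ℕ) (hp : p.Prime) (hodd : Odd p) (n : ℕ) (hn : 1 ≤ n)
    (a b c d : ℤ)
    (hDesc : 2 * (a ^ 2 + b ^ 2 + c ^ 2 + d ^ 2) = (a + b + c + d) ^ 2)
    (hab : (p : ℤ) ∣ (a + b)) (hnot : ¬ ((p : ℤ) ∣ a ∧ (p : ℤ) ∣ b)) :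
    ∀ ℓ : ℤ, ∃ x : ℤ,
      (a + b) * x ^ 2 - (a + b + c - d) * x + c ≡ ℓ [ZMOD ((p : ℤ) ^ n)] :=
  stmt_5_general p hp hodd n a b c d hDesc hab hnot
end

section
/- Let p be an odd prime, n ≥ 1, and m = pⁿ. Let (a,b,c,d) be a Descartes quadruple with p ∤ a+b, and let f(x) = (a+b)x² − (a+b+c−d)x + c be the pinch polynomial. Then the image of f on ℤ/mℤ equals { (a+b)·q − a·b·(a+b)⁻¹ : q a square in ℤ/mℤ }, where (a+b)⁻¹ is the inverse of a+b modulo m; in particular this image has the same cardinality as the set of squares in ℤ/mℤ. -/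
/-!
Since `2` and `u = a + b` are units mod `pⁿ`, the pinch polynomial can be completed to a square:
`f(x) = u (x - t)² - ab u⁻¹` with `t = (a + b + c - d) / 2u`, because the Descartes relation says
exactly that the discriminant of `f` is `4ab`. As `x ↦ x - t` is a bijection, the image of `f` is
the image of the squares under the affine map `q ↦ u q - ab u⁻¹`, which is injective.
-/

lemma ZMod.isUnit_intCast_of_not_dvd_prime_pow {p : ℕ} (hp : p.Prime) (n : ℕ) {k : ℤ}
    (hk : ¬ (p : ℤ) ∣ k) : IsUnit (k : ZMod (p ^ n)) := by
  rw [ZMod.coe_int_isUnit_iff_isCoprime, Nat.cast_pow]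
  exact ((Nat.prime_iff_prime_int.mp hp).coprime_iff_not_dvd.mpr hk).pow_left

lemma Nat.Prime.not_intCast_dvd_two_of_odd {p : ℕ} (hp : p.Prime) (hodd : Odd p) :
    ¬ (p : ℤ) ∣ 2 := by
  intro h
  have hp2 : p = 2 := (Nat.prime_dvd_prime_iff_eq hp Nat.prime_two).mp (by exact_mod_cast h)
  exact Nat.not_even_iff_odd.mpr hodd (hp2 ▸ even_two)

lemma descartes_pinch_discriminant {a b c d : ℤ}
    (hDesc : 2 * (a ^ 2 + b ^ 2 + c ^ 2 + d ^ 2) = (a + b + c + d) ^ 2) :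
    (a + b + c - d) ^ 2 - 4 * (a + b) * c = 4 * (a * b) := by
  linear_combination hDesc

section CompletingTheSquare

variable {R : Type*} [CommRing R]

lemma exists_quadratic_eq_sq_sub {u v s c e : R} (huv : u * v = 1) (h2 : IsUnit (2 : R))
    (hdisc : s ^ 2 - 4 * u * c = 4 * e) :
    ∃ t : R, ∀ x : R, u * x ^ 2 - s * x + c = u * (x - t) ^ 2 - e * v := by
  obtain ⟨w, hw⟩ := h2.exists_right_inv
  -- `t = s / 2u`, and then `u t² = s² v / 4 = c + e v` by `hdisc`.
  refine ⟨s * w * v, fun x => ?_⟩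
  linear_combination (2 * s * x * w - 4 * w ^ 2 * v * e - 4 * w ^ 2 * c * (u * v + 1)) * huv
    + s * x * hw - u * w ^ 2 * v ^ 2 * hdisc - (2 * w + 1) * (c + e * v) * hw

lemma setOf_quadratic_eq_affine_squares {u v s c e : R} (huv : u * v = 1) (h2 : IsUnit (2 : R))
    (hdisc : s ^ 2 - 4 * u * c = 4 * e) :
    {y : R | ∃ x : R, u * x ^ 2 - s * x + c = y}
      = {y : R | ∃ q : R, (∃ z : R, q = z ^ 2) ∧ y = u * q - e * v} := by
  obtain ⟨t, ht⟩ := exists_quadratic_eq_sq_sub huv h2 hdisc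
  ext y
  constructor
  · rintro ⟨x, rfl⟩
    exact ⟨(x - t) ^ 2, ⟨x - t, rfl⟩, ht x⟩
  · rintro ⟨_, ⟨z, rfl⟩, rfl⟩
    exact ⟨z + t, by rw [ht, add_sub_cancel_right]⟩

lemma ncard_setOf_affine {u : R} (hu : IsUnit u) (k : R) (S : Set R) :
    {y : R | ∃ q : R, q ∈ S ∧ y = u * q - k}.ncard = S.ncard := by
  have himage : {y : R | ∃ q : R, q ∈ S ∧ y = u * q - k} = (fun q => u * q - k) '' S := by
    ext y
    simp only [Set.mem_ofPred_eq, Set.mem_image, eq_comm]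
  rw [himage]
  exact Set.ncard_image_of_injective S fun q₁ q₂ h => hu.mul_left_cancel (sub_left_inj.mp h)

end CompletingTheSquare

theorem stmt_6_general (p : ℕ) (hp : p.Prime) (hodd : Odd p) (n : ℕ)
    (a b c d : ℤ)
    (hDesc : 2 * (a ^ 2 + b ^ 2 + c ^ 2 + d ^ 2) = (a + b + c + d) ^ 2)
    (hab : ¬ (p : ℤ) ∣ (a + b)) :
    {y : ZMod (p ^ n) | ∃ x : ZMod (p ^ n),
        ((a + b : ℤ) : ZMod (p ^ n)) * x ^ 2 - ((a + b + c - d : ℤ) : ZMod (p ^ n)) * x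
          + ((c : ℤ) : ZMod (p ^ n)) = y}
      = {y : ZMod (p ^ n) | ∃ q : ZMod (p ^ n), (∃ z : ZMod (p ^ n), q = z ^ 2) ∧
          y = ((a + b : ℤ) : ZMod (p ^ n)) * q
              - ((a * b : ℤ) : ZMod (p ^ n)) * (((a + b : ℤ) : ZMod (p ^ n)))⁻¹} ∧
    {y : ZMod (p ^ n) | ∃ x : ZMod (p ^ n),
        ((a + b : ℤ) : ZMod (p ^ n)) * x ^ 2 - ((a + b + c - d : ℤ) : ZMod (p ^ n)) * x
          + ((c : ℤ) : ZMod (p ^ n)) = y}.ncard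
      = {q : ZMod (p ^ n) | ∃ z : ZMod (p ^ n), q = z ^ 2}.ncard := by
  have hu : IsUnit ((a + b : ℤ) : ZMod (p ^ n)) :=
    ZMod.isUnit_intCast_of_not_dvd_prime_pow hp n hab
  have h2 : IsUnit (2 : ZMod (p ^ n)) := by
    exact_mod_cast ZMod.isUnit_intCast_of_not_dvd_prime_pow hp n
      (hp.not_intCast_dvd_two_of_odd hodd)
  have hdisc : ((a + b + c - d : ℤ) : ZMod (p ^ n)) ^ 2 - 4 * ((a + b : ℤ) : ZMod (p ^ n)) * c
      = 4 * ((a * b : ℤ) : ZMod (p ^ n)) := by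
    exact_mod_cast congrArg (Int.cast : ℤ → ZMod (p ^ n)) (descartes_pinch_discriminant hDesc)
  have hset := setOf_quadratic_eq_affine_squares (ZMod.mul_inv_of_unit _ hu) h2 hdisc
  refine ⟨hset, ?_⟩
  rw [hset]
  exact ncard_setOf_affine hu _ _

/-- if `p ∤ a+b`, the image of the pinch polynomial modulo `m = pⁿ` equals
`(a+b)·Q − ab·(a+b)⁻¹` where `Q` is the set of squares, and has the same cardinality as `Q`. -/
theorem stmt_6 (p : ℕ) (hp : p.Prime) (hodd : Odd p) (n : ℕ) (hn : 1 ≤ n)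
    (a b c d : ℤ)
    (hDesc : 2 * (a ^ 2 + b ^ 2 + c ^ 2 + d ^ 2) = (a + b + c + d) ^ 2)
    (hab : ¬ (p : ℤ) ∣ (a + b)) :
    {y : ZMod (p ^ n) | ∃ x : ZMod (p ^ n),
        ((a + b : ℤ) : ZMod (p ^ n)) * x ^ 2 - ((a + b + c - d : ℤ) : ZMod (p ^ n)) * x
          + ((c : ℤ) : ZMod (p ^ n)) = y}
      = {y : ZMod (p ^ n) | ∃ q : ZMod (p ^ n), (∃ z : ZMod (p ^ n), q = z ^ 2) ∧
          y = ((a + b : ℤ) : ZMod (p ^ n)) * q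
              - ((a * b : ℤ) : ZMod (p ^ n)) * (((a + b : ℤ) : ZMod (p ^ n)))⁻¹} ∧
    {y : ZMod (p ^ n) | ∃ x : ZMod (p ^ n),
        ((a + b : ℤ) : ZMod (p ^ n)) * x ^ 2 - ((a + b + c - d : ℤ) : ZMod (p ^ n)) * x
          + ((c : ℤ) : ZMod (p ^ n)) = y}.ncard
      = {q : ZMod (p ^ n) | ∃ z : ZMod (p ^ n), q = z ^ 2}.ncard :=
  stmt_6_general p hp hodd n a b c d hDesc hab
end

section
/- Assume Bunyakovsky's conjecture for quadratics. Let (a,b,c,d) be a primitive Descartes quadruple with a+b > 0, with ab not a perfect square, and with c odd, and let f(x) = (a+b)x² − (a+b+c−d)x + c be its pinch polynomial. Let m > 1 be an integer coprime to 6, and let ℓ be an integer with gcd(ℓ, m) = 1 such that f(x₀) ≡ ℓ (mod m) for some integer x₀. Then the set of integers x such that f(x) is prime and f(x) ≡ ℓ (mod m) is infinite. -/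
/-!
Shifting the pinch polynomial `f` to the progression `x₀ + m ℤ` gives the quadratic
`g(y) = f(m y + x₀)`, whose values all lie in the class of `ℓ`, and Bunyakovsky's conjecture
applies to `g`. It is irreducible over `ℚ` because, by the Descartes relation, the discriminant of
`f` is `4ab`, which is not a rational square. It has no fixed prime divisor: a prime `q ∣ m` does
not divide `ℓ`, and for `q ∤ m` the substitution `x = m y + x₀` reaches every residue mod `q`, while
`f` does not vanish identically mod `q`; for `q = 2` because `f(0) = c` is odd, and for odd `q`
because `f(0) = c`, `f(1) = d`, `f(-1) = 2(a + b) + 2c - d` and the Descartes relation would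
force `q` to divide `a`, `b`, `c` and `d`.
-/

/-- Bunyakovsky's conjecture for quadratic polynomials: every quadratic `g ∈ ℤ[x]` with
positive leading coefficient, irreducible over `ℚ`, whose values at positive integers have
no common prime factor, takes prime values at infinitely many positive integers. -/
def BunyakovskyQuadratic : Prop :=
  ∀ g : Polynomial ℤ, g.natDegree = 2 → 0 < g.leadingCoeff →
    Irreducible (g.map (Int.castRingHom ℚ)) →
    (∀ q : ℕ, q.Prime → ∃ n : ℕ, 0 < n ∧ ¬ ((q : ℤ) ∣ g.eval (n : ℤ))) →
    {n : ℕ | 0 < n ∧ Prime (g.eval (n : ℤ))}.Infinite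

open Polynomial

theorem Int.ModEq.eval {n x y : ℤ} (h : x ≡ y [ZMOD n]) (P : ℤ[X]) :
    P.eval x ≡ P.eval y [ZMOD n] :=
  Int.modEq_iff_dvd.2 (h.dvd.trans (sub_dvd_eval_sub y x P))

theorem Int.exists_mul_add_modEq {m q : ℤ} (h : IsCoprime m q) (x₀ x : ℤ) :
    ∃ y, m * y + x₀ ≡ x [ZMOD q] := by
  obtain ⟨u, v, huv⟩ := h
  refine ⟨u * (x - x₀), Int.modEq_iff_dvd.2 ⟨v * (x - x₀), ?_⟩⟩
  linear_combination (x₀ - x) * huv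

theorem Int.exists_pos_natCast_modEq {q : ℤ} (hq : q ≠ 0) (y : ℤ) :
    ∃ n : ℕ, 0 < n ∧ (n : ℤ) ≡ y [ZMOD q] := by
  refine ⟨(y % q).toNat + q.natAbs, by have := Int.natAbs_pos.2 hq; omega, ?_⟩
  push_cast
  rw [Int.toNat_of_nonneg (Int.emod_nonneg y hq)]
  simpa using (Int.mod_modEq y q).add (Int.modEq_zero_iff_dvd.2 (self_dvd_abs q))

theorem Irreducible.comp_C_mul_X_add_C {R : Type*} [CommRing R] {p : R[X]}
    (hp : Irreducible p) {a : R} (ha : IsUnit a) (b : R) :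
    Irreducible (p.comp (C a * X + C b)) := by
  let := ha.invertible
  simpa [comp_eq_aeval] using hp.map (algEquivCMulXAddC a b)

theorem BunyakovskyQuadratic.infinite_setOf_modEq_prime_eval (hBun : BunyakovskyQuadratic)
    {f : ℤ[X]} (hdeg : f.natDegree = 2) (hlc : 0 < f.leadingCoeff)
    (hirr : Irreducible (f.map (Int.castRingHom ℚ))) {m : ℤ} (hm : 0 < m) (x₀ : ℤ)
    (hfix : ∀ q : ℕ, q.Prime → ∃ y, ¬ (q : ℤ) ∣ f.eval (m * y + x₀)) :
    {x : ℤ | x ≡ x₀ [ZMOD m] ∧ Prime (f.eval x)}.Infinite := by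
  set g := f.comp (C m * X + C x₀)
  have hm0 : m ≠ 0 := hm.ne'
  have hg : ∀ y, g.eval y = f.eval (m * y + x₀) := by simp [g]
  have hlin : (C m * X + C x₀).natDegree = 1 := natDegree_linear hm0
  have hdeg_g : g.natDegree = 2 := by rw [natDegree_comp, hdeg, hlin]
  have hlc_g : 0 < g.leadingCoeff := by
    rw [leadingCoeff_comp (by rw [hlin]; norm_num), leadingCoeff_linear hm0, hdeg]
    positivity
  have hirr_g : Irreducible (g.map (Int.castRingHom ℚ)) := by
    simpa [g, map_comp] using
      hirr.comp_C_mul_X_add_C (isUnit_iff_ne_zero.2 (Int.cast_ne_zero.2 hm0)) (x₀ : ℚ)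
  have hfix_g : ∀ q : ℕ, q.Prime → ∃ n : ℕ, 0 < n ∧ ¬ (q : ℤ) ∣ g.eval (n : ℤ) := by
    intro q hq
    obtain ⟨y, hy⟩ := hfix q hq
    obtain ⟨n, hn, hny⟩ := Int.exists_pos_natCast_modEq (Int.natCast_ne_zero.2 hq.ne_zero) y
    exact ⟨n, hn, by rwa [hg, ((hny.mul_left m).add_right x₀).eval f |>.dvd_iff]⟩
  have hinj : Set.InjOn (fun n : ℕ => m * n + x₀) {n | 0 < n ∧ Prime (g.eval (n : ℤ))} :=
    fun n₁ _ n₂ _ h => by simpa [hm0] using h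
  refine ((hBun g hdeg_g hlc_g hirr_g hfix_g).image hinj).mono ?_
  rintro _ ⟨n, ⟨-, hn⟩, rfl⟩
  exact ⟨Int.modEq_iff_dvd.2 ⟨-n, by ring⟩, by rwa [← hg]⟩

noncomputable def pinchPoly (a b c d : ℤ) : ℤ[X] :=
  C (a + b) * X ^ 2 - C (a + b + c - d) * X + C c

section DescartesQuadruple

variable {a b c d : ℤ}

@[simp]
theorem eval_pinchPoly (x : ℤ) :
    (pinchPoly a b c d).eval x = (a + b) * x ^ 2 - (a + b + c - d) * x + c := by
  simp [pinchPoly]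

theorem pinchPoly_eq_quadratic :
    pinchPoly a b c d = C (a + b) * X ^ 2 + C (-(a + b + c - d)) * X + C c := by
  rw [pinchPoly, C_neg, neg_mul, ← sub_eq_add_neg]

theorem natDegree_pinchPoly (hab : a + b ≠ 0) : (pinchPoly a b c d).natDegree = 2 := by
  rw [pinchPoly_eq_quadratic, natDegree_quadratic hab]

theorem leadingCoeff_pinchPoly (hab : a + b ≠ 0) :
    (pinchPoly a b c d).leadingCoeff = a + b := by
  rw [pinchPoly_eq_quadratic, leadingCoeff_quadratic hab]

variable (hDesc : 2 * (a ^ 2 + b ^ 2 + c ^ 2 + d ^ 2) = (a + b + c + d) ^ 2)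
include hDesc

theorem irreducible_map_pinchPoly (hab : a + b ≠ 0) (hsq : ¬ IsSquare (a * b)) :
    Irreducible ((pinchPoly a b c d).map (Int.castRingHom ℚ)) := by
  refine irreducible_of_degree_le_three_of_not_isRoot ?_ fun t ht => hsq ?_
  · rw [natDegree_map_eq_of_injective (RingHom.injective_int _), natDegree_pinchPoly hab]
    decide
  · have hroot : (a + b : ℚ) * t ^ 2 - (a + b + c - d) * t + c = 0 := by
      simpa [pinchPoly] using ht
    have hDescQ : 2 * ((a : ℚ) ^ 2 + b ^ 2 + c ^ 2 + d ^ 2) = (a + b + c + d) ^ 2 := by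
      exact_mod_cast hDesc
    -- completing the square: the discriminant of `f` is `4ab` by the Descartes relation
    have hab_sq : ((a * b : ℤ) : ℚ) = ((a + b) * t - (a + b + c - d) / 2) ^ 2 := by
      push_cast
      linear_combination -(a + b : ℚ) * hroot - hDescQ / 4
    exact Rat.isSquare_intCast_iff.1 ⟨_, hab_sq.trans (sq _)⟩

theorem exists_not_dvd_eval_pinchPoly (hprim : Int.gcd (Int.gcd (Int.gcd a b : ℤ) c : ℤ) d = 1)
    (hc : Odd c) {q : ℕ} (hq : q.Prime) : ∃ x, ¬ (q : ℤ) ∣ (pinchPoly a b c d).eval x := by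
  rcases eq_or_ne q 2 with rfl | hq2
  · exact ⟨0, by simpa [← even_iff_two_dvd] using hc⟩
  by_contra! hdvd
  have : Fact q.Prime := ⟨hq⟩
  have hzero (x : ℤ) : (a + b : ZMod q) * x ^ 2 - (a + b + c - d) * x + c = 0 := by
    simpa using (ZMod.intCast_zmod_eq_zero_iff_dvd _ q).2 (hdvd x)
  have hc0 : (c : ZMod q) = 0 := by simpa using hzero 0
  have hd0 : (d : ZMod q) = 0 := by linear_combination hzero 1
  have htwo : (2 : ZMod q) ≠ 0 := by
    simpa using (ZMod.natCast_eq_zero_iff 2 q).not.2 fun h =>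
      hq2 ((Nat.prime_dvd_prime_iff_eq hq Nat.prime_two).1 h)
  have hab0 : (a + b : ZMod q) = 0 :=
    (mul_eq_zero.1 (by linear_combination hzero (-1) - 2 * hc0 + hd0)).resolve_left htwo
  have hDescq : 2 * ((a : ZMod q) ^ 2 + b ^ 2 + c ^ 2 + d ^ 2) = (a + b + c + d) ^ 2 := by
    exact_mod_cast congrArg (Int.cast : ℤ → ZMod q) hDesc
  have hsub0 : (a - b : ZMod q) = 0 := pow_eq_zero_iff two_ne_zero |>.1 <| by
    linear_combination hDescq + 2 * (c + d : ZMod q) * hab0 - (c - d : ZMod q) * hc0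
      + (c - d : ZMod q) * hd0
  have ha0 : (a : ZMod q) = 0 :=
    (mul_eq_zero.1 (by linear_combination hab0 + hsub0 : (2 : ZMod q) * a = 0)).resolve_left htwo
  have hb0 : (b : ZMod q) = 0 := by linear_combination hab0 - ha0
  simp only [ZMod.intCast_zmod_eq_zero_iff_dvd] at ha0 hb0 hc0 hd0
  have hgcd := Int.dvd_coe_gcd (Int.dvd_coe_gcd (Int.dvd_coe_gcd ha0 hb0) hc0) hd0
  rw [hprim, Nat.cast_one, Int.natCast_dvd_ofNat] at hgcd
  exact hq.not_dvd_one hgcd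

end DescartesQuadruple

theorem stmt_7_general (hBun : BunyakovskyQuadratic)
    (a b c d : ℤ)
    (hDesc : 2 * (a ^ 2 + b ^ 2 + c ^ 2 + d ^ 2) = (a + b + c + d) ^ 2)
    (hprim : Int.gcd (Int.gcd (Int.gcd a b : ℤ) c : ℤ) d = 1)
    (hab : 0 < a + b) (hsq : ¬ IsSquare (a * b)) (hc : Odd c)
    (m : ℤ) (hm : 1 < m)
    (ℓ : ℤ) (hℓ : Int.gcd ℓ m = 1)
    (hrep : ∃ x₀ : ℤ, (a + b) * x₀ ^ 2 - (a + b + c - d) * x₀ + c ≡ ℓ [ZMOD m]) :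
    {x : ℤ | Prime ((a + b) * x ^ 2 - (a + b + c - d) * x + c) ∧
      (a + b) * x ^ 2 - (a + b + c - d) * x + c ≡ ℓ [ZMOD m]}.Infinite := by
  obtain ⟨x₀, hx₀⟩ := hrep
  simp_rw [← eval_pinchPoly] at hx₀ ⊢
  have hfix (q : ℕ) (hq : q.Prime) : ∃ y, ¬ (q : ℤ) ∣ (pinchPoly a b c d).eval (m * y + x₀) := by
    by_cases hqm : (q : ℤ) ∣ m
    · refine ⟨0, fun hqf => hq.not_dvd_one ?_⟩
      have hqℓ : (q : ℤ) ∣ ℓ := ((hx₀.of_dvd hqm).dvd_iff).1 (by simpa using hqf)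
      exact_mod_cast hℓ ▸ Int.dvd_coe_gcd hqℓ hqm
    · obtain ⟨x, hx⟩ := exists_not_dvd_eval_pinchPoly hDesc hprim hc hq
      have hcop : IsCoprime (q : ℤ) m := (Nat.prime_iff_prime_int.1 hq).coprime_iff_not_dvd.2 hqm
      obtain ⟨y, hy⟩ := Int.exists_mul_add_modEq hcop.symm x₀ x
      exact ⟨y, by rwa [(hy.eval _).dvd_iff]⟩
  refine (hBun.infinite_setOf_modEq_prime_eval (natDegree_pinchPoly hab.ne')
    (leadingCoeff_pinchPoly hab.ne' ▸ hab) (irreducible_map_pinchPoly hDesc hab.ne' hsq)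
    (by omega) x₀ hfix).mono ?_
  exact fun x ⟨hx, hp⟩ => ⟨hp, (hx.eval _).trans hx₀⟩

/-- assuming Bunyakovsky, a pinch polynomial of a primitive Descartes quadruple
(with `a+b>0`, `ab` not a square, `c` odd) takes infinitely many prime values in any
invertible residue class mod `m` (coprime to 6) that it attains. -/
theorem stmt_7 (hBun : BunyakovskyQuadratic)
    (a b c d : ℤ)
    (hDesc : 2 * (a ^ 2 + b ^ 2 + c ^ 2 + d ^ 2) = (a + b + c + d) ^ 2)
    (hprim : Int.gcd (Int.gcd (Int.gcd a b : ℤ) c : ℤ) d = 1)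
    (hab : 0 < a + b) (hsq : ¬ IsSquare (a * b)) (hc : Odd c)
    (m : ℤ) (hm : 1 < m) (hm6 : Int.gcd m 6 = 1)
    (ℓ : ℤ) (hℓ : Int.gcd ℓ m = 1)
    (hrep : ∃ x₀ : ℤ, (a + b) * x₀ ^ 2 - (a + b + c - d) * x₀ + c ≡ ℓ [ZMOD m]) :
    {x : ℤ | Prime ((a + b) * x ^ 2 - (a + b + c - d) * x + c) ∧
      (a + b) * x ^ 2 - (a + b + c - d) * x + c ≡ ℓ [ZMOD m]}.Infinite :=
  stmt_7_general hBun a b c d hDesc hprim hab hsq hc m hm ℓ hℓ hrep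
end

section
/- Let (a,b,c,d) be a primitive Descartes quadruple with a+b > 0, with ab not a perfect square, and with c odd. Then the pinch polynomial f(x) = (a+b)x² − (a+b+c−d)x + c has positive leading coefficient, is irreducible over ℚ, and for every prime q there exists an integer n with q ∤ f(n). -/
/-!
By the Descartes equation the discriminant of the pinch polynomial is
`(a+b+c-d)² - 4(a+b)c = 4ab`, which is not a rational square, so `f` has no rational root.
If a prime `q` divided every value of `f`, it would divide `f(0) = c`, `f(1) = d` and
`f(-1) = 2(a+b) + 2c - d`, hence `2(a+b)`. As `c` is odd, `q` is odd, so `q ∣ a+b`; the Descartes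
equation then gives `q ∣ (a-b)²`, so `q` divides `a` and `b` too, contradicting primitivity.
-/

open Polynomial

theorem discrim_eq_four_mul_of_descartes {R : Type*} [CommRing R] {a b c d : R}
    (h : 2 * (a ^ 2 + b ^ 2 + c ^ 2 + d ^ 2) = (a + b + c + d) ^ 2) :
    discrim (a + b) (-(a + b + c - d)) c = 4 * (a * b) := by
  rw [discrim]
  linear_combination h

theorem four_mul_ne_sq_of_not_isSquare {K : Type*} [Field K] [NeZero (2 : K)] {x : K}
    (hx : ¬IsSquare x) (s : K) : 4 * x ≠ s ^ 2 := fun h =>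
  hx ⟨s / 2, by field_simp; linear_combination h⟩

theorem irreducible_quadratic_of_discrim_ne_sq {K : Type*} [Field K] {a b c : K} (ha : a ≠ 0)
    (h : ∀ s : K, discrim a b c ≠ s ^ 2) : Irreducible (C a * X ^ 2 + C b * X + C c) := by
  have hdeg : (C a * X ^ 2 + C b * X + C c).natDegree = 2 := natDegree_quadratic ha
  have hp0 : C a * X ^ 2 + C b * X + C c ≠ 0 := fun h0 => by simp [h0] at hdeg
  rw [irreducible_iff_roots_eq_zero_of_degree_le_three (by omega) (by omega),
    Multiset.eq_zero_iff_forall_notMem]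
  intro x hx
  rw [mem_roots hp0, IsRoot] at hx
  refine quadratic_ne_zero_of_discrim_ne_sq h x ?_
  simpa [sq] using hx

theorem Prime.dvd_and_dvd_of_descartes {q a b c d : ℤ} (hq : Prime q) (hq2 : ¬q ∣ 2)
    (h : 2 * (a ^ 2 + b ^ 2 + c ^ 2 + d ^ 2) = (a + b + c + d) ^ 2)
    (hab : q ∣ a + b) (hc : q ∣ c) (hd : q ∣ d) : q ∣ a ∧ q ∣ b := by
  have hsq : (a - b) ^ 2 = (a + b) * (2 * (c + d)) + c * (2 * d - c) - d * d := by
    linear_combination h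
  have hsub : q ∣ a - b := hq.dvd_of_dvd_pow (n := 2) <| hsq ▸
    dvd_sub (dvd_add (hab.mul_right _) (hc.mul_right _)) (hd.mul_right _)
  have h2a : q ∣ 2 * a := by
    rw [show 2 * a = (a + b) + (a - b) by ring]
    exact dvd_add hab hsub
  have ha : q ∣ a := (hq.dvd_or_dvd h2a).resolve_left hq2
  exact ⟨ha, by simpa using dvd_sub hab ha⟩

theorem exists_not_dvd_pinch_of_descartes {q a b c d : ℤ} (hq : Prime q)
    (h : 2 * (a ^ 2 + b ^ 2 + c ^ 2 + d ^ 2) = (a + b + c + d) ^ 2)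
    (hprim : Int.gcd (Int.gcd (Int.gcd a b : ℤ) c : ℤ) d = 1) (hc : Odd c) :
    ∃ n : ℤ, ¬q ∣ (a + b) * n ^ 2 - (a + b + c - d) * n + c := by
  by_contra! hdiv
  have hqc : q ∣ c := by simpa using hdiv 0
  have hqd : q ∣ d := by
    have h1 := hdiv 1
    rwa [show (a + b) * 1 ^ 2 - (a + b + c - d) * 1 + c = d by ring] at h1
  have hq2ab : q ∣ 2 * (a + b) := by
    have h := dvd_sub (dvd_add (hdiv (-1)) hqd) (hqc.mul_left 2)
    rwa [show (a + b) * (-1) ^ 2 - (a + b + c - d) * (-1) + c + d - 2 * c = 2 * (a + b) by ring]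
      at h
  have hq2 : ¬q ∣ 2 := fun h2 => by
    obtain ⟨k, rfl⟩ := hc
    exact hq.not_dvd_one ((dvd_add_right (h2.mul_right k)).mp hqc)
  obtain ⟨hqa, hqb⟩ :=
    hq.dvd_and_dvd_of_descartes hq2 h ((hq.dvd_or_dvd hq2ab).resolve_left hq2) hqc hqd
  have := Int.dvd_coe_gcd (Int.dvd_coe_gcd (Int.dvd_coe_gcd hqa hqb) hqc) hqd
  rw [hprim] at this
  exact hq.not_dvd_one (by exact_mod_cast this)

/-- for a primitive Descartes quadruple with `a+b>0`, `ab` not a square and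
`c` odd, the pinch polynomial has positive leading coefficient, is irreducible over `ℚ`,
and has no fixed prime divisor. -/
theorem stmt_8 (a b c d : ℤ)
    (hDesc : 2 * (a ^ 2 + b ^ 2 + c ^ 2 + d ^ 2) = (a + b + c + d) ^ 2)
    (hprim : Int.gcd (Int.gcd (Int.gcd a b : ℤ) c : ℤ) d = 1)
    (hab : 0 < a + b) (hsq : ¬ IsSquare (a * b)) (hc : Odd c) :
    0 < a + b ∧
    Irreducible (Polynomial.C ((a : ℚ) + b) * Polynomial.X ^ 2
        - Polynomial.C ((a : ℚ) + b + c - d) * Polynomial.X + Polynomial.C (c : ℚ)) ∧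
    (∀ q : ℕ, q.Prime → ∃ n : ℤ,
      ¬ ((q : ℤ) ∣ ((a + b) * n ^ 2 - (a + b + c - d) * n + c))) := by
  refine ⟨hab, ?_, fun q hq => exists_not_dvd_pinch_of_descartes
    (Nat.prime_iff_prime_int.mp hq) hDesc hprim hc⟩
  have hA : (a : ℚ) + b ≠ 0 := by exact_mod_cast hab.ne'
  have hdisc := discrim_eq_four_mul_of_descartes (a := (a : ℚ)) (b := b) (c := c) (d := d)
    (by exact_mod_cast hDesc)
  have hsqQ : ¬IsSquare ((a : ℚ) * b) := by exact_mod_cast mt Rat.isSquare_intCast_iff.mp hsq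
  rw [sub_eq_add_neg, ← neg_mul, ← C_neg]
  exact irreducible_quadratic_of_discrim_ne_sq hA
    (hdisc ▸ four_mul_ne_sq_of_not_isSquare hsqQ)
end

section
/- Let i ≠ j be indices in {1,2,3,4} and let s ≥ 1 be an integer. Then the s-term swap product W_{ji}(s) agrees with the 4×4 identity matrix in all rows other than rows i and j, and: if s is odd, then row i of W_{ji}(s) has entry −s in column i, entry s+1 in column j, and entry s(s+1) in the other two columns, while row j has entry −(s−1) in column i, entry s in column j, and entry s(s−1) in the other two columns; if s is even, then row i of W_{ji}(s) has entry −(s−1) in column i, entry s in column j, and entry s(s−1) in the other two columns, while row j has entry −s in column i, entry s+1 in column j, and entry s(s+1) in the other two columns. -/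
/-!
Write `R(n)` for the row vector with entry `-n` in column `i`, `n + 1` in column `j` and
`n (n + 1)` elsewhere. By induction on `s`, the row of `W_{ji}(s)` indexed by the last letter
applied is `R(s)`, the other row of `{i, j}` is `R(s - 1)`, and all remaining rows are those of
the identity. Left multiplication by `S_k` replaces row `k` by twice the column sums minus three
times row `k`, and the rows `R(n)` satisfy `R(n + 1) = 2 R(n) - R(n - 1) + 2 e`, where `e` is
the indicator of the columns outside `{i, j}`: exactly what that update produces.
-/

/-- The Apollonian group generator `Sᵢ` (0-indexed: `ApGen i` is `S_{i+1}`): the 4×4 integer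
matrix agreeing with the identity except in row `i`, whose diagonal entry is `-1` and whose
other entries are `2`. -/
def ApGen (i : Fin 4) : Matrix (Fin 4) (Fin 4) ℤ :=
  Matrix.of fun r c => if r = i then (if c = i then -1 else 2) else (if r = c then 1 else 0)

/-- The `s`-term swap product `W_{ji}(s)` (0-indexed `i`, `j`): the `s`-letter alternating
product of `S_j` and `S_i` whose `k`-th factor from the right is `S_i` for odd `k` and `S_j`
for even `k`. -/
def SwapProd (j i : Fin 4) : ℕ → Matrix (Fin 4) (Fin 4) ℤ
  | 0 => 1
  | s + 1 => (if (s + 1) % 2 = 1 then ApGen i else ApGen j) * SwapProd j i s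

open Matrix

def swapRow {α : Type*} [DecidableEq α] (i j : α) (n : ℤ) (c : α) : ℤ :=
  if c = i then -n else if c = j then n + 1 else n * (n + 1)

lemma swapRow_add_one {α : Type*} [DecidableEq α] (i j : α) (n : ℤ) (c : α) :
    swapRow i j (n + 1) c =
      2 * swapRow i j n c - swapRow i j (n - 1) c + if c = i ∨ c = j then 0 else 2 := by
  unfold swapRow
  split_ifs <;> first | tauto | ring

lemma sum_col_of_rows_eq_one {ι R : Type*} [Fintype ι] [DecidableEq ι] [Ring R]
    {M : Matrix ι ι R} {a b : ι} (hab : a ≠ b)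
    (hM : ∀ r, r ≠ a → r ≠ b → M r = (1 : Matrix ι ι R) r) (c : ι) :
    ∑ x, M x c = M a c + M b c + if c = a ∨ c = b then 0 else 1 := by
  have hdiff : ∑ x, (M - 1) x c = (M - 1) a c + (M - 1) b c :=
    Fintype.sum_eq_add a b hab fun x hx => by simp [hM x hx.1 hx.2]
  have hsum : ∑ x, M x c = ∑ x, (M - 1) x c + ∑ x, (1 : Matrix ι ι R) x c := by
    rw [← Finset.sum_add_distrib]; simp
  rw [hsum, hdiff]
  by_cases ha : c = a
  · subst ha; simp [one_apply, Ne.symm hab]; abel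
  by_cases hb : c = b
  · subst hb; simp [one_apply, hab, ha]; abel
  simp [one_apply, ha, hb, Ne.symm ha, Ne.symm hb]

lemma apGen_mul_apply_self (k : Fin 4) (M : Matrix (Fin 4) (Fin 4) ℤ) (c : Fin 4) :
    (ApGen k * M) k c = 2 * ∑ x, M x c - 3 * M k c := by
  have hrow : ∀ x, ApGen k k x * M x c = 2 * M x c - if x = k then 3 * M x c else 0 := by
    intro x
    by_cases hx : x = k
    · simp [ApGen, hx]; ring
    · simp [ApGen, hx]
  simp only [mul_apply, hrow, Finset.sum_sub_distrib, ← Finset.mul_sum, Finset.sum_ite_eq',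
    Finset.mem_univ, if_true]

lemma apGen_mul_row_of_ne {k r : Fin 4} (hr : r ≠ k) (M : Matrix (Fin 4) (Fin 4) ℤ) :
    (ApGen k * M) r = M r := by
  ext c
  simp [mul_apply, ApGen, hr, ite_mul]

structure SwapShape (i j a b : Fin 4) (n : ℤ) (M : Matrix (Fin 4) (Fin 4) ℤ) : Prop where
  row_lead : M a = swapRow i j n
  row_prev : M b = swapRow i j (n - 1)
  row_other : ∀ r, r ≠ i → r ≠ j → M r = (1 : Matrix (Fin 4) (Fin 4) ℤ) r

lemma SwapShape.apGen_mul {i j a b : Fin 4} {n : ℤ} {M : Matrix (Fin 4) (Fin 4) ℤ}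
    (hab : a = i ∧ b = j ∨ a = j ∧ b = i) (hij : i ≠ j) (hM : SwapShape i j a b n M) :
    SwapShape i j b a (n + 1) (ApGen b * M) := by
  have hne : a ≠ b := by rcases hab with ⟨rfl, rfl⟩ | ⟨rfl, rfl⟩ <;> tauto
  have hrb : ∀ r, r ≠ i → r ≠ j → r ≠ b := by
    rcases hab with ⟨-, rfl⟩ | ⟨-, rfl⟩ <;> tauto
  refine ⟨funext fun c => ?_, by rw [apGen_mul_row_of_ne hne, hM.row_lead, add_sub_cancel_right],
    fun r hri hrj => by rw [apGen_mul_row_of_ne (hrb r hri hrj), hM.row_other r hri hrj]⟩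
  have hpair : M i c + M j c = M a c + M b c := by
    rcases hab with ⟨rfl, rfl⟩ | ⟨rfl, rfl⟩ <;> ring
  rw [apGen_mul_apply_self, sum_col_of_rows_eq_one hij hM.row_other, hpair, swapRow_add_one,
    congrFun hM.row_lead, congrFun hM.row_prev]
  split_ifs <;> ring

def swapLead (i j : Fin 4) (s : ℕ) : Fin 4 := if s % 2 = 1 then i else j

lemma swapLead_pair (i j : Fin 4) (s : ℕ) :
    swapLead i j s = i ∧ swapLead i j (s + 1) = j ∨
      swapLead i j s = j ∧ swapLead i j (s + 1) = i := by
  unfold swapLead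
  rcases Nat.mod_two_eq_zero_or_one s with h | h <;> simp [h, Nat.succ_mod_two_eq_one_iff]

lemma swapProd_swapShape {i j : Fin 4} (hij : i ≠ j) (s : ℕ) :
    SwapShape i j (swapLead i j s) (swapLead i j (s + 1)) s (SwapProd j i s) := by
  induction s with
  | zero =>
    refine ⟨?_, ?_, fun r hrj hri => rfl⟩ <;> ext c <;>
      by_cases hi : c = i <;> by_cases hj : c = j <;>
      simp_all [swapLead, swapRow, SwapProd, one_apply, eq_comm]
  | succ s ih =>
    have hlead : swapLead i j (s + 1 + 1) = swapLead i j s := by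
      simp only [swapLead, Nat.add_assoc, Nat.add_mod_right]
    rw [SwapProd, ← apply_ite ApGen, hlead, Nat.cast_succ]
    exact ih.apGen_mul (swapLead_pair i j s) hij

theorem stmt_9_general (i j : Fin 4) (hij : i ≠ j) (s : ℕ) :
    (∀ r : Fin 4, r ≠ i → r ≠ j → ∀ col : Fin 4,
        SwapProd j i s r col = if r = col then 1 else 0) ∧
    (Odd s →
      SwapProd j i s i i = -(s : ℤ) ∧
      SwapProd j i s i j = (s : ℤ) + 1 ∧
      (∀ col : Fin 4, col ≠ i → col ≠ j →
        SwapProd j i s i col = (s : ℤ) * ((s : ℤ) + 1)) ∧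
      SwapProd j i s j i = -((s : ℤ) - 1) ∧
      SwapProd j i s j j = (s : ℤ) ∧
      (∀ col : Fin 4, col ≠ i → col ≠ j →
        SwapProd j i s j col = (s : ℤ) * ((s : ℤ) - 1))) ∧
    (Even s →
      SwapProd j i s i i = -((s : ℤ) - 1) ∧
      SwapProd j i s i j = (s : ℤ) ∧
      (∀ col : Fin 4, col ≠ i → col ≠ j →
        SwapProd j i s i col = (s : ℤ) * ((s : ℤ) - 1)) ∧
      SwapProd j i s j i = -(s : ℤ) ∧
      SwapProd j i s j j = (s : ℤ) + 1 ∧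
      (∀ col : Fin 4, col ≠ i → col ≠ j →
        SwapProd j i s j col = (s : ℤ) * ((s : ℤ) + 1))) := by
  have hW := swapProd_swapShape hij s
  have hji := Ne.symm hij
  refine ⟨fun r hri hrj col => ?_, fun hs => ?_, fun hs => ?_⟩
  · rw [hW.row_other r hri hrj, one_apply]
  · have ha : swapLead i j s = i := if_pos (Nat.odd_iff.mp hs)
    have hb : swapLead i j (s + 1) = j := if_neg (by have := Nat.odd_iff.mp hs; omega)
    rw [ha, hb] at hW
    simp +contextual [congrFun hW.row_lead, congrFun hW.row_prev, swapRow, hji, mul_comm]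
  · have ha : swapLead i j s = j := if_neg (by have := Nat.even_iff.mp hs; omega)
    have hb : swapLead i j (s + 1) = i := if_pos (by have := Nat.even_iff.mp hs; omega)
    rw [ha, hb] at hW
    simp +contextual [congrFun hW.row_lead, congrFun hW.row_prev, swapRow, hji, mul_comm]

/-- explicit form of the entries of the `s`-term swap product `W_{ji}(s)`. -/
theorem stmt_9 (i j : Fin 4) (hij : i ≠ j) (s : ℕ) (hs : 1 ≤ s) :
    (∀ r : Fin 4, r ≠ i → r ≠ j → ∀ col : Fin 4,
        SwapProd j i s r col = if r = col then 1 else 0) ∧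
    (Odd s →
      SwapProd j i s i i = -(s : ℤ) ∧
      SwapProd j i s i j = (s : ℤ) + 1 ∧
      (∀ col : Fin 4, col ≠ i → col ≠ j →
        SwapProd j i s i col = (s : ℤ) * ((s : ℤ) + 1)) ∧
      SwapProd j i s j i = -((s : ℤ) - 1) ∧
      SwapProd j i s j j = (s : ℤ) ∧
      (∀ col : Fin 4, col ≠ i → col ≠ j →
        SwapProd j i s j col = (s : ℤ) * ((s : ℤ) - 1))) ∧
    (Even s →
      SwapProd j i s i i = -((s : ℤ) - 1) ∧
      SwapProd j i s i j = (s : ℤ) ∧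
      (∀ col : Fin 4, col ≠ i → col ≠ j →
        SwapProd j i s i col = (s : ℤ) * ((s : ℤ) - 1)) ∧
      SwapProd j i s j i = -(s : ℤ) ∧
      SwapProd j i s j j = (s : ℤ) + 1 ∧
      (∀ col : Fin 4, col ≠ i → col ≠ j →
        SwapProd j i s j col = (s : ℤ) * ((s : ℤ) + 1))) :=
  stmt_9_general i j hij s
end

section
/- Let r and s be odd positive integers and set u = rs + 1. Then the third row of the 4×4 integer matrix W₄₃(s)·W₃₂(r) equals (u² + s² − 1 + su, −su, −rs + (r+1)s(s+1), 1 + s − rs(r−1) + r(r+1)s(s+1)). -/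
theorem swapProd_one (j i : Fin 4) : SwapProd j i 1 = ApGen i := by
  simp [SwapProd]

theorem swapProd_add_two_of_odd (j i : Fin 4) {n : ℕ} (hn : Odd n) :
    SwapProd j i (n + 2) = ApGen i * ApGen j * SwapProd j i n := by
  have hodd : (n + 2) % 2 = 1 := by grind
  have heven : (n + 1) % 2 ≠ 1 := by grind
  simp only [SwapProd, hodd, heven, if_true, if_false, Matrix.mul_assoc]

theorem swapProd_of_odd_eq {j i : Fin 4} (M : ℤ → Matrix (Fin 4) (Fin 4) ℤ)
    (h_one : ApGen i = M 1) (h_step : ∀ m : ℤ, ApGen i * ApGen j * M m = M (m + 2))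
    {n : ℕ} (hn : Odd n) : SwapProd j i n = M n := by
  obtain ⟨k, rfl⟩ := hn
  induction k with
  | zero => simpa [swapProd_one] using h_one
  | succ k ih =>
    rw [show 2 * (k + 1) + 1 = 2 * k + 1 + 2 by ring,
      swapProd_add_two_of_odd _ _ (odd_two_mul_add_one k), ih, h_step]
    push_cast
    rfl

def swapProdThreeTwoOdd (m : ℤ) : Matrix (Fin 4) (Fin 4) ℤ :=
  !![1, 0, 0, 0;
     0, 1, 0, 0;
     m * (m + 1), m * (m + 1), -m, m + 1;
     (m - 1) * m, (m - 1) * m, -(m - 1), m]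

def swapProdTwoOneOdd (m : ℤ) : Matrix (Fin 4) (Fin 4) ℤ :=
  !![1, 0, 0, 0;
     m * (m + 1), -m, m + 1, m * (m + 1);
     (m - 1) * m, -(m - 1), m, (m - 1) * m;
     0, 0, 0, 1]

theorem swapProd_three_two_of_odd {n : ℕ} (hn : Odd n) :
    SwapProd 3 2 n = swapProdThreeTwoOdd n := by
  refine swapProd_of_odd_eq _ ?_ (fun m ↦ ?_) hn <;> ext a b <;>
    fin_cases a <;> fin_cases b <;>
    simp [ApGen, swapProdThreeTwoOdd, Matrix.mul_apply, Fin.sum_univ_four] <;> ring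

theorem swapProd_two_one_of_odd {n : ℕ} (hn : Odd n) :
    SwapProd 2 1 n = swapProdTwoOneOdd n := by
  refine swapProd_of_odd_eq _ ?_ (fun m ↦ ?_) hn <;> ext a b <;>
    fin_cases a <;> fin_cases b <;>
    simp [ApGen, swapProdTwoOneOdd, Matrix.mul_apply, Fin.sum_univ_four] <;> ring

theorem stmt_10_general (r s : ℕ) (hr : Odd r) (hs : Odd s) :
    (SwapProd 3 2 s * SwapProd 2 1 r) 2 0
        = ((r : ℤ) * s + 1) ^ 2 + (s : ℤ) ^ 2 - 1 + (s : ℤ) * ((r : ℤ) * s + 1) ∧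
    (SwapProd 3 2 s * SwapProd 2 1 r) 2 1 = -((s : ℤ) * ((r : ℤ) * s + 1)) ∧
    (SwapProd 3 2 s * SwapProd 2 1 r) 2 2
        = -((r : ℤ) * s) + ((r : ℤ) + 1) * (s : ℤ) * ((s : ℤ) + 1) ∧
    (SwapProd 3 2 s * SwapProd 2 1 r) 2 3
        = 1 + (s : ℤ) - (r : ℤ) * s * ((r : ℤ) - 1)
            + (r : ℤ) * ((r : ℤ) + 1) * (s : ℤ) * ((s : ℤ) + 1) := by
  rw [swapProd_three_two_of_odd hs, swapProd_two_one_of_odd hr]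
  refine ⟨?_, ?_, ?_, ?_⟩ <;>
    simp [swapProdThreeTwoOdd, swapProdTwoOneOdd, Matrix.mul_apply, Fin.sum_univ_four] <;> ring

/-- the third row of `W₄₃(s)·W₃₂(r)` for odd positive `r`, `s`
(here `W₄₃ = SwapProd 3 2` and `W₃₂ = SwapProd 2 1` in 0-indexed notation,
and the third row is row `2`). -/
theorem stmt_10 (r s : ℕ) (hr : Odd r) (hs : Odd s) (hr0 : 0 < r) (hs0 : 0 < s) :
    (SwapProd 3 2 s * SwapProd 2 1 r) 2 0
        = ((r : ℤ) * s + 1) ^ 2 + (s : ℤ) ^ 2 - 1 + (s : ℤ) * ((r : ℤ) * s + 1) ∧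
    (SwapProd 3 2 s * SwapProd 2 1 r) 2 1 = -((s : ℤ) * ((r : ℤ) * s + 1)) ∧
    (SwapProd 3 2 s * SwapProd 2 1 r) 2 2
        = -((r : ℤ) * s) + ((r : ℤ) + 1) * (s : ℤ) * ((s : ℤ) + 1) ∧
    (SwapProd 3 2 s * SwapProd 2 1 r) 2 3
        = 1 + (s : ℤ) - (r : ℤ) * s * ((r : ℤ) - 1)
            + (r : ℤ) * ((r : ℤ) + 1) * (s : ℤ) * ((s : ℤ) + 1) :=
  stmt_10_general r s hr hs
end

section
/- Let m > 1 be an integer with gcd(m, 30) = 1, and let (a,b,c,d) be a Descartes quadruple with gcd(c+d, m) = 1. Then there exist odd integers s₀ and r₀ with 1 ≤ s₀, r₀ ≤ 2m such that for every integer ℓ there is an even integer t with 0 ≤ t < 2m for which the third coordinate of the vector W₄₃(s₀)·W₃₂(r₀)·W₂₁(t)·(a,b,c,d)ᵀ is congruent to ℓ modulo m. -/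
open Matrix Function

lemma apGen_mulVec (i : Fin 4) (v : Fin 4 → ℤ) :
    ApGen i *ᵥ v = update v i (2 * ∑ k, v k - 3 * v i) := by
  ext r
  rcases eq_or_ne r i with rfl | hr
  · have hrow : ∀ k, (if k = r then -1 else 2) * v k =
        2 * v k - 3 * (if k = r then v k else 0) := by
      intro k; split_ifs <;> ring
    simp [ApGen, mulVec, dotProduct, hrow, Finset.sum_sub_distrib, ← Finset.mul_sum]
  · simp [ApGen, mulVec, dotProduct, hr]

lemma sum_update_update {ι M : Type*} [Fintype ι] [DecidableEq ι] [AddCommGroup M] {i j : ι}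
    (hij : i ≠ j) {v : ι → M} {σ : M}
    (hv : ∑ k, v k = v i + v j + σ) (x y : M) :
    ∑ k, update (update v i x) j y k = x + y + σ := by
  have hi : i ∈ Finset.univ.erase j := by simpa using hij
  rw [← Finset.add_sum_erase _ _ (Finset.mem_univ j), ← Finset.add_sum_erase _ _ hi] at hv ⊢
  have hrest : ∀ k ∈ (Finset.univ.erase j).erase i, update (update v i x) j y k = v k := by
    intro k hk
    simp only [Finset.mem_erase] at hk
    simp [update_of_ne hk.1, update_of_ne hk.2.1]
  rw [Finset.sum_congr rfl hrest]
  rw [← add_assoc, add_comm (v j)] at hv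
  simp only [update_self, update_of_ne hij, add_left_cancel hv]
  abel

lemma swapProd_two_mul_add_one (j i : Fin 4) (n : ℕ) :
    SwapProd j i (2 * n + 1) = ApGen i * SwapProd j i (2 * n) := by
  simp [SwapProd]

lemma swapProd_two_mul_add_two (j i : Fin 4) (n : ℕ) :
    SwapProd j i (2 * n + 2) = ApGen j * SwapProd j i (2 * n + 1) := by
  simp [SwapProd, Nat.add_mod]

def swapPoly {R : Type*} [CommRing R] (x y σ t : R) : R :=
  (1 - t) * x + t * y + σ * t * (t - 1)

lemma swapPoly_add_one_add_one {R : Type*} [CommRing R] (x y σ t : R) :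
    swapPoly x y σ (t + 1 + 1) =
      2 * (swapPoly x y σ t + swapPoly x y σ (t + 1) + σ) - 3 * swapPoly x y σ t := by
  unfold swapPoly; ring

section SwapOrbit

variable {i j : Fin 4} (hij : i ≠ j) {v : Fin 4 → ℤ} {σ : ℤ} (hv : ∑ k, v k = v i + v j + σ)
include hij hv

local notation "q" => swapPoly (v i) (v j) σ

lemma apGen_mulVec_swap_left (t : ℤ) :
    ApGen i *ᵥ update (update v i (q t)) j (q (t + 1)) =
      update (update v i (q (t + 1 + 1))) j (q (t + 1)) := by
  rw [apGen_mulVec, sum_update_update hij hv, update_of_ne hij, update_self, update_comm hij.symm,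
    update_idem, swapPoly_add_one_add_one]

lemma apGen_mulVec_swap_right (t : ℤ) :
    ApGen j *ᵥ update (update v i (q (t + 1))) j (q t) =
      update (update v i (q (t + 1))) j (q (t + 1 + 1)) := by
  rw [apGen_mulVec, sum_update_update hij hv, update_self, update_idem, swapPoly_add_one_add_one,
    add_comm (q (t + 1))]

lemma swapProd_mulVec_two_mul (n : ℕ) :
    SwapProd j i (2 * n) *ᵥ v = update (update v i (q (2 * n))) j (q (2 * n + 1)) := by
  induction n with
  | zero => simp [SwapProd, swapPoly]
  | succ n ih =>
    rw [mul_add_one, swapProd_two_mul_add_two, swapProd_two_mul_add_one, ← mulVec_mulVec,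
      ← mulVec_mulVec, ih, apGen_mulVec_swap_left hij hv, apGen_mulVec_swap_right hij hv]
    push_cast
    rw [show 2 * ((n : ℤ) + 1) = 2 * n + 1 + 1 by ring]

lemma swapProd_mulVec_of_even {t : ℕ} (ht : Even t) :
    SwapProd j i t *ᵥ v = update (update v i (q t)) j (q (t + 1)) := by
  obtain ⟨n, rfl⟩ := ht.two_dvd
  exact_mod_cast swapProd_mulVec_two_mul hij hv n

lemma swapProd_mulVec_of_odd {s : ℕ} (hs : Odd s) :
    SwapProd j i s *ᵥ v = update (update v i (q (s + 1))) j (q s) := by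
  obtain ⟨n, rfl⟩ := hs
  rw [swapProd_two_mul_add_one, ← mulVec_mulVec, swapProd_mulVec_two_mul hij hv,
    apGen_mulVec_swap_left hij hv]
  push_cast
  rfl

end SwapOrbit

def swapChainCoord {R : Type*} [CommRing R] (a b c d t r s : R) : R :=
  let A := swapPoly a b (c + d) t
  let B := swapPoly a b (c + d) (t + 1)
  swapPoly (swapPoly B c (A + d) r) d (A + swapPoly B c (A + d) (r + 1)) (s + 1)

lemma swapProd_chain_mulVec_apply_two (a b c d : ℤ) {t r s : ℕ} (ht : Even t) (hr : Odd r)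
    (hs : Odd s) :
    ((SwapProd 3 2 s * SwapProd 2 1 r * SwapProd 1 0 t) *ᵥ ![a, b, c, d]) 2 =
      swapChainCoord a b c d t r s := by
  let A := swapPoly a b (c + d) t
  let B' := swapPoly (swapPoly a b (c + d) (t + 1)) c (A + d) (r + 1)
  rw [← mulVec_mulVec, ← mulVec_mulVec, swapProd_mulVec_of_even (σ := c + d) (by decide) ?_ ht,
    swapProd_mulVec_of_odd (σ := A + d) (by decide) ?_ hr,
    swapProd_mulVec_of_odd (σ := A + B') (by decide) ?_ hs]
  · simp [swapChainCoord, A, B']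
  all_goals simp only [Fin.sum_univ_four, update_apply, Fin.isValue, Fin.reduceEq, ↓reduceIte,
    cons_val_zero, cons_val_one, cons_val]; ring

lemma Int.cast_swapChainCoord {R : Type*} [CommRing R] (a b c d t r s : ℤ) :
    ((swapChainCoord a b c d t r s : ℤ) : R) =
      swapChainCoord (a : R) (b : R) (c : R) (d : R) (t : R) (r : R) (s : R) := by
  simp [swapChainCoord, swapPoly]

lemma swapChainCoord_two {R : Type*} [CommRing R] (a b c d t : R) {s : R}
    (hs : 5 * s + 4 = 0) :
    swapChainCoord a b c d t 2 s =
      swapChainCoord a b c d 0 2 s - 2 * s * (2 * s + 1) * (c + d) * t := by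
  unfold swapChainCoord swapPoly
  -- for `r = 2` the coordinate is `s (5s + 4) A(t)` plus an affine function of `t`,
  -- where `A(t) - a = (b - a) t + (c + d) t (t - 1)`
  linear_combination s * ((b - a) * t + (c + d) * t * (t - 1)) * hs

lemma isUnit_mul_two_mul_add_one {R : Type*} [CommRing R] {s : R} (hs : 5 * s + 4 = 0)
    (h12 : IsUnit (12 : R)) : IsUnit (s * (2 * s + 1)) :=
  isUnit_of_mul_isUnit_right (x := 25) <| by
    rwa [show 25 * (s * (2 * s + 1)) = 12 by linear_combination (10 * s - 3) * hs]

lemma exists_five_mul_add_four_eq_zero {R : Type*} [CommRing R] (h5 : IsUnit (5 : R)) :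
    ∃ s : R, 5 * s + 4 = 0 := by
  obtain ⟨u, hu⟩ := h5
  exact ⟨-4 * ↑u⁻¹, by rw [← hu, mul_left_comm, Units.mul_inv, mul_one, neg_add_cancel]⟩

lemma exists_odd_natCast_eq {m : ℕ} (hm : Odd m) (z : ZMod m) :
    ∃ s : ℕ, Odd s ∧ 1 ≤ s ∧ s ≤ 2 * m ∧ (s : ZMod m) = z := by
  have : NeZero m := ⟨hm.pos.ne'⟩
  have hz := z.val_lt
  rcases Nat.even_or_odd z.val with he | ho
  · exact ⟨z.val + m, he.add_odd hm, by omega, by omega, by simp⟩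
  · exact ⟨z.val, ho, ho.pos, by omega, ZMod.natCast_zmod_val z⟩

lemma exists_lt_add_mul_natCast_eq {m : ℕ} [NeZero m] {u : ZMod m} (hu : IsUnit u)
    (k ℓ : ZMod m) : ∃ n < m, k + u * n = ℓ := by
  obtain ⟨u, rfl⟩ := hu
  refine ⟨(↑u⁻¹ * (ℓ - k)).val, ZMod.val_lt _, ?_⟩
  rw [ZMod.natCast_zmod_val, Units.mul_inv_cancel_left, add_sub_cancel]

lemma ZMod.isUnit_natCast_of_dvd_pow {m n k e : ℕ} (h : Nat.Coprime m n) (hk : k ∣ n ^ e) :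
    IsUnit (k : ZMod m) :=
  (ZMod.isUnit_iff_coprime k m).mpr ((h.symm.pow_left e).coprime_dvd_left hk)

lemma ZMod.isUnit_intCast_of_gcd_eq_one {m : ℕ} {z : ℤ} (h : Int.gcd z m = 1) :
    IsUnit (z : ZMod m) :=
  isCoprime_zero_right.mp <| by
    simpa using (Int.isCoprime_iff_gcd_eq_one.mpr h).map (Int.castRingHom (ZMod m))

theorem stmt_11_general (m : ℕ) (hm30 : Nat.Coprime m 30)
    (a b c d : ℤ)
    (hcd : Int.gcd (c + d) (m : ℤ) = 1) :
    ∃ s₀ r₀ : ℕ, Odd s₀ ∧ Odd r₀ ∧ 1 ≤ s₀ ∧ s₀ ≤ 2 * m ∧ 1 ≤ r₀ ∧ r₀ ≤ 2 * m ∧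
      ∀ ℓ : ℤ, ∃ t : ℕ, Even t ∧ t < 2 * m ∧
        ((SwapProd 3 2 s₀ * SwapProd 2 1 r₀ * SwapProd 1 0 t).mulVec ![a, b, c, d]) 2
          ≡ ℓ [ZMOD (m : ℤ)] := by
  have hm : Odd m := (hm30.coprime_dvd_right (by norm_num : 2 ∣ 30)).odd_of_right
  have : NeZero m := ⟨hm.pos.ne'⟩
  have h5 : IsUnit (5 : ZMod m) := by
    exact_mod_cast ZMod.isUnit_natCast_of_dvd_pow (k := 5) (e := 1) hm30 (by norm_num)
  have h4 : IsUnit (4 : ZMod m) := by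
    exact_mod_cast ZMod.isUnit_natCast_of_dvd_pow (k := 4) (e := 2) hm30 (by norm_num)
  have h12 : IsUnit (12 : ZMod m) := by
    exact_mod_cast ZMod.isUnit_natCast_of_dvd_pow (k := 12) (e := 2) hm30 (by norm_num)
  have hcd' : IsUnit ((c : ZMod m) + d) := by
    exact_mod_cast ZMod.isUnit_intCast_of_gcd_eq_one hcd
  obtain ⟨s, hs⟩ := exists_five_mul_add_four_eq_zero h5
  obtain ⟨s₀, hs₀, hs₀_pos, hs₀_le, rfl⟩ := exists_odd_natCast_eq hm s
  obtain ⟨r₀, hr₀, hr₀_pos, hr₀_le, hr⟩ := exists_odd_natCast_eq hm 2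
  refine ⟨s₀, r₀, hs₀, hr₀, hs₀_pos, hs₀_le, hr₀_pos, hr₀_le, fun ℓ => ?_⟩
  have hslope : IsUnit (-4 * (s₀ * (2 * s₀ + 1)) * (c + d) : ZMod m) :=
    (h4.neg.mul (isUnit_mul_two_mul_add_one hs h12)).mul hcd'
  obtain ⟨n, hn, hnℓ⟩ := exists_lt_add_mul_natCast_eq hslope (swapChainCoord a b c d 0 2 s₀) ℓ
  refine ⟨2 * n, even_two_mul n, by omega, ?_⟩
  rw [← ZMod.intCast_eq_intCast_iff,
    swapProd_chain_mulVec_apply_two a b c d (even_two_mul n) hr₀ hs₀, Int.cast_swapChainCoord]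
  push_cast
  rw [hr, swapChainCoord_two _ _ _ _ _ hs, ← hnℓ]
  ring

/-- for `gcd(m,30)=1` and a Descartes quadruple with `gcd(c+d,m)=1`, there
are odd `s₀, r₀ ∈ [1, 2m]` such that every residue class mod `m` is attained by the third
coordinate of `W₄₃(s₀)·W₃₂(r₀)·W₂₁(t)·(a,b,c,d)ᵀ` for some even `t` with `0 ≤ t < 2m`
(0-indexed: `W₄₃ = SwapProd 3 2`, `W₃₂ = SwapProd 2 1`, `W₂₁ = SwapProd 1 0`). -/
theorem stmt_11 (m : ℕ) (hm : 1 < m) (hm30 : Nat.Coprime m 30)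
    (a b c d : ℤ)
    (hDesc : 2 * (a ^ 2 + b ^ 2 + c ^ 2 + d ^ 2) = (a + b + c + d) ^ 2)
    (hcd : Int.gcd (c + d) (m : ℤ) = 1) :
    ∃ s₀ r₀ : ℕ, Odd s₀ ∧ Odd r₀ ∧ 1 ≤ s₀ ∧ s₀ ≤ 2 * m ∧ 1 ≤ r₀ ∧ r₀ ≤ 2 * m ∧
      ∀ ℓ : ℤ, ∃ t : ℕ, Even t ∧ t < 2 * m ∧
        ((SwapProd 3 2 s₀ * SwapProd 2 1 r₀ * SwapProd 1 0 t).mulVec ![a, b, c, d]) 2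
          ≡ ℓ [ZMOD (m : ℤ)] :=
  stmt_11_general m hm30 a b c d hcd
end

section
/- Let m > 1 be an odd integer, and let (a,b,c,d) be a primitive Descartes quadruple in which d is an odd prime, a is odd, and a + d > 0. Then there exists an even integer k ≥ 0 such that c' := k(k+1)(a+d) − kb + (k+1)c (the third coordinate of W₃₂(k)·(a,b,c,d)ᵀ) satisfies c' > 0 and gcd(c' + d, m·d) = 1. -/
/-! With `A = a + d`, `B = a + d - b + c`, `C = c + d` one has `c' + d = A k² + B k + C`.
Rewritten in `a + d, b + d, c + d`, the Descartes relation shows that an odd prime dividing all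
three divides `d`, hence `a, b, c, d`; so by primitivity no odd prime `p ∣ m d` divides all of
`A, B, C`, and the quadratic is then nonzero mod `p` at one of `0, ±1`. The Chinese remainder
theorem glues these residues to an `r` with `A r² + B r + C` coprime to `m d`. As `m d` is odd, `r`
has arbitrarily large even representatives mod `m d`, and a large one gives `c' > 0` since `A > 0`.
-/

theorem IsCoprime.exists_dvd_sub {R : Type*} [CommRing R] {x y : R} (h : IsCoprime x y)
    (a b : R) : ∃ r, x ∣ r - a ∧ y ∣ r - b := by
  obtain ⟨u, v, huv⟩ := h
  exact ⟨a * (v * y) + b * (u * x), ⟨(b - a) * u, by linear_combination a * huv⟩,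
    ⟨(a - b) * v, by linear_combination b * huv⟩⟩

theorem isCoprime_apply_of_dvd_sub {f : ℤ → ℤ} (hf : ∀ x y, x - y ∣ f x - f y) {n x y : ℤ}
    (hxy : n ∣ x - y) (hy : IsCoprime (f y) n) : IsCoprime (f x) n := by
  obtain ⟨t, ht⟩ := hxy.trans (hf x y)
  simpa [sub_eq_iff_eq_add.mp ht, add_comm] using hy.add_mul_left_left t

theorem exists_isCoprime_apply_of_forall_prime_dvd {f : ℤ → ℤ}
    (hf : ∀ x y, x - y ∣ f x - f y) {n : ℤ} (hn : n ≠ 0)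
    (h : ∀ p, Prime p → p ∣ n → ∃ r, ¬ p ∣ f r) : ∃ r, IsCoprime (f r) n := by
  induction n using UniqueFactorizationMonoid.induction_on_coprime with
  | h0 => exact absurd rfl hn
  | h1 hu =>
    exact ⟨0, by simpa using (isCoprime_mul_unit_right_right hu (f 0) 1).mpr isCoprime_one_right⟩
  | hpr i hp =>
    rcases i with _ | i
    · exact ⟨0, by simpa using isCoprime_one_right⟩
    obtain ⟨r, hr⟩ := h _ hp (dvd_pow_self _ i.succ_ne_zero)
    exact ⟨r, (isCoprime_comm.mp ((hp.coprime_iff_not_dvd).mpr hr)).pow_right⟩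
  | hcp hxy ihx ihy =>
    obtain ⟨rx, hrx⟩ := ihx (left_ne_zero_of_mul hn) fun p hp hpx => h p hp (hpx.mul_right _)
    obtain ⟨ry, hry⟩ := ihy (right_ne_zero_of_mul hn) fun p hp hpy => h p hp (hpy.mul_left _)
    obtain ⟨r, hx, hy⟩ := (isRelPrime_iff_isCoprime.mp hxy).exists_dvd_sub rx ry
    exact ⟨r, (isCoprime_apply_of_dvd_sub hf hx hrx).mul_right
      (isCoprime_apply_of_dvd_sub hf hy hry)⟩

theorem exists_not_dvd_quadratic {p : ℤ} (hp : Prime p) (hp2 : ¬ p ∣ 2) {A B C : ℤ}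
    (h : ¬ (p ∣ A ∧ p ∣ B ∧ p ∣ C)) : ∃ r, ¬ p ∣ A * r ^ 2 + B * r + C := by
  by_contra! hall
  have h0 := hall 0
  have h1 := hall 1
  have h2 := hall (-1)
  norm_num at h0 h1 h2
  -- The values at `0, 1, -1` determine `C`, `2 A` and `2 B`.
  refine h ⟨?_, ?_, h0⟩
  · refine (hp.dvd_mul.mp ?_).resolve_left hp2
    have := dvd_sub (dvd_add h1 h2) (dvd_mul_of_dvd_right h0 2)
    convert this using 1; ring
  · refine (hp.dvd_mul.mp ?_).resolve_left hp2
    convert dvd_sub h1 h2 using 1; ring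

theorem not_dvd_add_all_of_descartes {a b c d p : ℤ}
    (hDesc : 2 * (a ^ 2 + b ^ 2 + c ^ 2 + d ^ 2) = (a + b + c + d) ^ 2)
    (hprim : Int.gcd (Int.gcd (Int.gcd a b : ℤ) c : ℤ) d = 1) (hp : Prime p) (hp2 : ¬ p ∣ 2) :
    ¬ (p ∣ a + d ∧ p ∣ b + d ∧ p ∣ c + d) := by
  rintro ⟨⟨x, hx⟩, ⟨y, hy⟩, ⟨z, hz⟩⟩
  -- In the variables `a + d, b + d, c + d` the Descartes form is `4 d²` plus a quadratic form.
  obtain rfl := eq_sub_of_add_eq hx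
  obtain rfl := eq_sub_of_add_eq hy
  obtain rfl := eq_sub_of_add_eq hz
  have h4d : p ∣ 2 * 2 * d ^ 2 :=
    ⟨p * ((x + y + z) ^ 2 - 2 * (x ^ 2 + y ^ 2 + z ^ 2)), by linear_combination hDesc⟩
  have hpd : p ∣ d := hp.dvd_of_dvd_pow <|
    (hp.dvd_mul.mp h4d).resolve_left fun h4 => hp2 ((hp.dvd_mul.mp h4).elim id id)
  have hpx : ∀ w, p ∣ p * w - d := fun w => dvd_sub (dvd_mul_right p w) hpd
  refine hp.not_dvd_one ?_
  rw [← Int.natCast_one, ← hprim]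
  exact Int.dvd_coe_gcd (Int.dvd_coe_gcd (Int.dvd_coe_gcd (hpx x) (hpx y)) (hpx z)) hpd

theorem exists_even_dvd_sub_le {n : ℤ} (hn : Odd n) (r N : ℤ) :
    ∃ k, n ∣ k - r ∧ Even k ∧ N ≤ k := by
  -- `r * (n + 1)` is even and congruent to `r`; adding multiples of `2 n` keeps both properties.
  set M := |N| + |r * (n + 1)|
  have hn2 : 1 ≤ n ^ 2 :=
    (one_le_sq_iff_one_le_abs n).mpr (Int.one_le_abs fun h => Int.not_odd_zero (h ▸ hn))
  refine ⟨r * (n + 1) + 2 * n ^ 2 * M, ⟨r + 2 * n * M, by ring⟩,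
    (hn.add_one.mul_left r).add ((even_two_mul _).mul_right M), ?_⟩
  nlinarith [le_abs_self N, neg_abs_le (r * (n + 1)), abs_nonneg N, abs_nonneg (r * (n + 1))]

theorem quadratic_pos_of_abs_add_abs_lt {A B C k : ℤ} (hA : 0 < A) (hk : |B| + |C| < k) :
    0 < A * k ^ 2 + B * k + C := by
  nlinarith [le_abs_self B, neg_abs_le B, le_abs_self C, neg_abs_le C, abs_nonneg B, abs_nonneg C]

theorem stmt_12_general (m : ℤ) (hmodd : Odd m)
    (a b c d : ℤ)
    (hDesc : 2 * (a ^ 2 + b ^ 2 + c ^ 2 + d ^ 2) = (a + b + c + d) ^ 2)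
    (hprim : Int.gcd (Int.gcd (Int.gcd a b : ℤ) c : ℤ) d = 1)
    (hdodd : Odd d) (had : 0 < a + d) :
    ∃ k : ℤ, Even k ∧ 0 ≤ k ∧
      0 < k * (k + 1) * (a + d) - k * b + (k + 1) * c ∧
      Int.gcd (k * (k + 1) * (a + d) - k * b + (k + 1) * c + d) (m * d) = 1 := by
  set f : ℤ → ℤ := fun k => (a + d) * k ^ 2 + (a + d - b + c) * k + (c + d)
  have hf : ∀ x y, x - y ∣ f x - f y := fun x y => ⟨(a + d) * (x + y) + (a + d - b + c), by ring⟩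
  have hn : Odd (m * d) := hmodd.mul hdodd
  obtain ⟨r, hr⟩ := exists_isCoprime_apply_of_forall_prime_dvd hf
    (fun h => Int.not_odd_zero (h ▸ hn)) fun p hp hpn => by
      have hp2 : ¬ p ∣ 2 := fun h2 =>
        hp.not_isUnit ((Int.isCoprime_two_left.mpr hn).isUnit_of_dvd' h2 hpn)
      refine exists_not_dvd_quadratic hp hp2 fun ⟨hA, hB, hC⟩ =>
        not_dvd_add_all_of_descartes hDesc hprim hp hp2 ⟨hA, ?_, hC⟩
      rw [show b + d = a + d + (c + d) - (a + d - b + c) by ring]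
      exact dvd_sub (dvd_add hA hC) hB
  obtain ⟨k, hkr, hk, hkN⟩ := exists_even_dvd_sub_le hn r (|a + d - b + c| + |c| + 1)
  have hc' : k * (k + 1) * (a + d) - k * b + (k + 1) * c + d = f k := by ring
  refine ⟨k, hk, le_trans (by positivity) hkN, ?_, ?_⟩
  · convert quadratic_pos_of_abs_add_abs_lt had (by linarith : |a + d - b + c| + |c| < k) using 1
    ring
  · rw [hc', ← Int.isCoprime_iff_gcd_eq_one]
    exact isCoprime_apply_of_dvd_sub hf hkr hr

/-- for `m > 1` odd and a primitive Descartes quadruple `(a,b,c,d)` with `d`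
an odd prime, `a` odd, and `a + d > 0`, there is an even `k ≥ 0` such that
`c' = k(k+1)(a+d) − kb + (k+1)c` (the third coordinate of `W₃₂(k)·(a,b,c,d)ᵀ`) satisfies
`c' > 0` and `gcd(c' + d, m·d) = 1`. -/
theorem stmt_12 (m : ℤ) (hm : 1 < m) (hmodd : Odd m)
    (a b c d : ℤ)
    (hDesc : 2 * (a ^ 2 + b ^ 2 + c ^ 2 + d ^ 2) = (a + b + c + d) ^ 2)
    (hprim : Int.gcd (Int.gcd (Int.gcd a b : ℤ) c : ℤ) d = 1)
    (hd : Prime d) (hdodd : Odd d) (haodd : Odd a) (had : 0 < a + d) :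
    ∃ k : ℤ, Even k ∧ 0 ≤ k ∧
      0 < k * (k + 1) * (a + d) - k * b + (k + 1) * c ∧
      Int.gcd (k * (k + 1) * (a + d) - k * b + (k + 1) * c + d) (m * d) = 1 :=
  stmt_12_general m hmodd a b c d hDesc hprim hdodd had
end

section
/- Let p ≥ 7 be a prime, let n ≥ 1, and set m = pⁿ. Let d be an integer with p ∤ d and let k be any integer. Then there exists an integer a such that p ∤ a, p ∤ (a + d), and a² + (2d − k)a − kd is congruent modulo m to a square, i.e. there is an integer w with a² + (2d − k)a − kd ≡ w² (mod m). -/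
/-!
Look for a square root of the form `w = a + c`. Then
`(a + c)² - (a² + (2d - k)a - kd) = c² + kd - u a` with `u = 2d - k - 2c`,
so it suffices to solve `u a ≡ c² + kd (mod pⁿ)`, which is possible once `p ∤ u`.
Modulo `p` this gives `a ≡ (c² + kd) / u` and `u (a + d) ≡ (c - d)² + d²`, so `a` and `a + d`
are units as soon as `c² + kd` and `(c - d)² + d²` are. These three conditions exclude at most
`2 + 2 + 1 = 5` residues `c`, and `p ≥ 7`.
-/

open Polynomial Cardinal

lemma exists_shift_of_five_lt_card {F : Type*} [Field F] (h2 : (2 : F) ≠ 0) (hF : 5 < #F)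
    (d k : F) :
    ∃ c : F, c ^ 2 + k * d ≠ 0 ∧ (c - d) ^ 2 + d ^ 2 ≠ 0 ∧ 2 * d - k - 2 * c ≠ 0 := by
  set f : F[X] := (X ^ 2 + C (k * d)) * ((X - C d) ^ 2 + C (d ^ 2)) * (C (2 * d - k) - 2 * X)
  have hdeg : f.natDegree = 5 := by
    unfold f
    compute_degree!
  obtain ⟨c, hc⟩ := f.exists_eval_ne_zero_of_natDegree_lt_card
    (fun h => by simp [h] at hdeg) (by rw [hdeg]; exact_mod_cast hF)
  refine ⟨c, ?_, ?_, ?_⟩ <;> intro h <;> apply hc <;> simp [f, h]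

lemma ne_zero_of_mul_eq_sq_add {R : Type*} [CommRing R] {a c d k : R}
    (h : (2 * d - k - 2 * c) * a = c ^ 2 + k * d) (h₁ : c ^ 2 + k * d ≠ 0)
    (h₂ : (c - d) ^ 2 + d ^ 2 ≠ 0) : a ≠ 0 ∧ a + d ≠ 0 := by
  refine ⟨fun ha => h₁ (by simp [← h, ha]), fun had => h₂ ?_⟩
  linear_combination (2 * d - k - 2 * c) * had - h

lemma sq_modEq_of_mul_modEq {m a c d k : ℤ}
    (h : (2 * d - k - 2 * c) * a ≡ c ^ 2 + k * d [ZMOD m]) :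
    a ^ 2 + (2 * d - k) * a - k * d ≡ (a + c) ^ 2 [ZMOD m] := by
  rw [Int.modEq_iff_dvd] at h ⊢
  convert h using 1
  ring

lemma Int.exists_mul_modEq_of_isCoprime {u m : ℤ} (h : IsCoprime u m) (b : ℤ) :
    ∃ a, u * a ≡ b [ZMOD m] := by
  obtain ⟨x, y, hxy⟩ := h
  refine ⟨b * x, Int.modEq_iff_dvd.mpr ⟨b * y, ?_⟩⟩
  linear_combination -b * hxy

lemma ZMod.two_ne_zero_of_two_lt {p : ℕ} (hp : 2 < p) : (2 : ZMod p) ≠ 0 := by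
  intro h
  have := Nat.le_of_dvd two_pos ((ZMod.natCast_eq_zero_iff 2 p).mp (by exact_mod_cast h))
  omega

theorem stmt_13_general (p : ℕ) (hp : p.Prime) (hp7 : 7 ≤ p) (n : ℕ)
    (d k : ℤ) :
    ∃ a w : ℤ, ¬ (p : ℤ) ∣ a ∧ ¬ (p : ℤ) ∣ (a + d) ∧
      a ^ 2 + (2 * d - k) * a - k * d ≡ w ^ 2 [ZMOD ((p : ℤ) ^ n)] := by
  have : Fact p.Prime := ⟨hp⟩
  obtain ⟨c₀, hc₁, hc₂, hu₀⟩ :=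
    exists_shift_of_five_lt_card (ZMod.two_ne_zero_of_two_lt (by omega))
      (by simp only [mk_fintype, ZMod.card]; exact_mod_cast (by omega : 5 < p)) (d : ZMod p) k
  obtain ⟨c, rfl⟩ := ZMod.intCast_surjective c₀
  have hu : IsCoprime (2 * d - k - 2 * c) ((p : ℤ) ^ (n + 1)) := by
    refine ((Nat.prime_iff_prime_int.mp hp).coprime_iff_not_dvd.mpr ?_).pow_left.symm
    rw [← ZMod.intCast_zmod_eq_zero_iff_dvd]
    push_cast
    exact hu₀
  -- Solving modulo `pⁿ⁺¹` rather than `pⁿ` keeps the information modulo `p` when `n = 0`.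
  obtain ⟨a, ha⟩ := Int.exists_mul_modEq_of_isCoprime hu (c ^ 2 + k * d)
  have ha_mod_p : ((2 * d - k - 2 * c) * a : ℤ) = ((c ^ 2 + k * d : ℤ) : ZMod p) :=
    (ZMod.intCast_eq_intCast_iff _ _ p).mpr (ha.of_dvd (dvd_pow_self _ n.succ_ne_zero))
  push_cast at ha_mod_p
  obtain ⟨ha₀, had₀⟩ := ne_zero_of_mul_eq_sq_add ha_mod_p hc₁ hc₂
  refine ⟨a, a + c, ?_, ?_,
    (sq_modEq_of_mul_modEq (pow_succ (p : ℤ) n ▸ ha)).of_mul_right _⟩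
  · rwa [← ZMod.intCast_zmod_eq_zero_iff_dvd]
  · rwa [← ZMod.intCast_zmod_eq_zero_iff_dvd, Int.cast_add]

/-- for a prime `p ≥ 7`, `m = pⁿ`, `p ∤ d`, and any integer `k`, there
exists `a` with `p ∤ a`, `p ∤ a + d`, and `a² + (2d − k)a − kd` a square modulo `m`. -/
theorem stmt_13 (p : ℕ) (hp : p.Prime) (hp7 : 7 ≤ p) (n : ℕ) (hn : 1 ≤ n)
    (d k : ℤ) (hd : ¬ (p : ℤ) ∣ d) :
    ∃ a w : ℤ, ¬ (p : ℤ) ∣ a ∧ ¬ (p : ℤ) ∣ (a + d) ∧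
      a ^ 2 + (2 * d - k) * a - k * d ≡ w ^ 2 [ZMOD ((p : ℤ) ^ n)] :=
  stmt_13_general p hp hp7 n d k
end

section
/- For every constant C > 0 there exist a constant C' > 0 and a real X₀ > eᵉ such that the following holds. For every real X ≥ X₀ and every set B of prime numbers satisfying card(B ∩ [2ᵏ, 2ᵏ⁺¹)) ≤ C·2ᵏ/k^{3/2} for every integer k ≥ 1, one has Σ_{(α₁,α₂) ∈ B_X × B_X, α₁ ≠ α₂} (1/(α₁·α₂))·∏_{p prime, p ∣ (α₁−α₂)} (1 + 1/p) ≤ C'·(log log log X)/(log log X). -/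
/-- For `X ≥ eᵉ` and a set `B` of naturals, `BX X B` is the set of `α ∈ B` lying in a
dyadic interval `[2ᵏ, 2ᵏ⁺¹)` for some integer `k` with `2·log log X ≤ k ≤ 3·log log X`. -/
def BX (X : ℝ) (B : Set ℕ) : Set ℕ :=
  {α | α ∈ B ∧ ∃ k : ℕ, 2 * Real.log (Real.log X) ≤ (k : ℝ) ∧
    (k : ℝ) ≤ 3 * Real.log (Real.log X) ∧ 2 ^ k ≤ α ∧ α < 2 ^ (k + 1)}

/-!
Uniformly in the pair, `|α₁ - α₂| < 2 ^ (⌊3 log log X⌋ + 1)`. For `n ≠ 0` with `log n ≤ T`, the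
primes `p ∣ n` above `T` contribute `O(1)` to `∑ 1/p`, and Mertens' estimate
`∑_{p ≤ T} 1/p ≤ log log T + O(1)` bounds the rest, so `∏_{p ∣ α₁ - α₂} (1 + 1/p) ≪ log log log X`.
What remains is at most `(∑_{α ∈ B_X} 1/α)²`, and by the density hypothesis each of the
`≤ log log X` dyadic blocks `[2ᵏ, 2ᵏ⁺¹)` with `k ≥ 2 log log X` contributes at most
`C / k^{3/2}`, so `∑_{α ∈ B_X} 1/α ≤ C / √(2 log log X)`.
-/

open Real Finset
open scoped Nat

theorem Nat.Prime.pow_div_dvd_factorial {p : ℕ} (hp : p.Prime) (N : ℕ) : p ^ (N / p) ∣ N ! := by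
  rw [hp.pow_dvd_factorial_iff (b := max 2 (Nat.log p N + 1)) (by omega)]
  simpa using single_le_sum (f := fun i ↦ N / p ^ i) (fun _ _ ↦ Nat.zero_le _)
    (show 1 ∈ Ico 1 (max 2 (Nat.log p N + 1)) by simp)

theorem prod_primesLE_pow_div_dvd_factorial (N : ℕ) : ∏ p ∈ N.primesLE, p ^ (N / p) ∣ N ! :=
  prod_dvd_of_isRelPrime
    (fun _ hp _ hq hpq ↦ Nat.coprime_iff_isRelPrime.mp <|
      Nat.coprime_pow_primes _ _ (Nat.prime_of_mem_primesLE hp) (Nat.prime_of_mem_primesLE hq) hpq)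
    fun _ hp ↦ (Nat.prime_of_mem_primesLE hp).pow_div_dvd_factorial N

theorem sum_primesLE_div_mul_log_le (N : ℕ) :
    ∑ p ∈ N.primesLE, ((N / p : ℕ) : ℝ) * log p ≤ N * log N := by
  have hpos : ∀ p ∈ N.primesLE, (0 : ℝ) < p ^ (N / p) := fun p hp ↦
    pow_pos (Nat.cast_pos.mpr (Nat.prime_of_mem_primesLE hp).pos) _
  have hle : ((∏ p ∈ N.primesLE, p ^ (N / p) : ℕ) : ℝ) ≤ (N ^ N : ℕ) := by
    exact_mod_cast (Nat.le_of_dvd N.factorial_pos (prod_primesLE_pow_div_dvd_factorial N)).trans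
      N.factorial_le_pow
  push_cast at hle
  simpa [log_prod (fun p hp ↦ (hpos p hp).ne'), log_pow] using
    log_le_log (prod_pos hpos) hle

theorem sum_primesLE_log_div_le (N : ℕ) : ∑ p ∈ N.primesLE, log p / p ≤ log N + 2 := by
  rcases N.eq_zero_or_pos with rfl | hN
  · simp
  have hfloor : ∀ p ∈ N.primesLE, (N : ℝ) / p * log p ≤ (((N / p : ℕ) : ℝ) + 1) * log p :=
    fun p _ ↦ mul_le_mul_of_nonneg_right
      ((Nat.floor_div_eq_div (K := ℝ) N p ▸ Nat.lt_floor_add_one _).le) (log_natCast_nonneg p)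
  have htheta : ∑ p ∈ N.primesLE, log p ≤ 2 * N := by
    have := Chebyshev.theta_le_log4_mul_x (Nat.cast_nonneg (α := ℝ) N)
    rw [Chebyshev.theta_eq_sum_primesLE_log] at this
    have hlog4 : log 4 ≤ 2 := by
      rw [show (4 : ℝ) = 2 ^ 2 by norm_num, log_pow]
      norm_num
      linarith [log_two_lt_d9]
    nlinarith [(Nat.cast_pos (α := ℝ)).mpr hN]
  have hN' : (0 : ℝ) < N := Nat.cast_pos.mpr hN
  suffices (N : ℝ) * ∑ p ∈ N.primesLE, log p / p ≤ N * (log N + 2) from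
    le_of_mul_le_mul_left this hN'
  calc (N : ℝ) * ∑ p ∈ N.primesLE, log p / p = ∑ p ∈ N.primesLE, (N : ℝ) / p * log p := by
        rw [mul_sum]; exact sum_congr rfl fun p _ ↦ by ring
    _ ≤ ∑ p ∈ N.primesLE, (((N / p : ℕ) : ℝ) + 1) * log p := sum_le_sum hfloor
    _ = ∑ p ∈ N.primesLE, ((N / p : ℕ) : ℝ) * log p + ∑ p ∈ N.primesLE, log p := by
        rw [← sum_add_distrib]; exact sum_congr rfl fun p _ ↦ by ring
    _ ≤ N * (log N + 2) := by linarith [sum_primesLE_div_mul_log_le N]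

theorem div_sub_div_le_log_sub_log {a x y : ℝ} (hx : 0 < x) (hxy : x ≤ y) (ha : a ≤ x) :
    a / x - a / y ≤ log y - log x := by
  have hy : 0 < y := hx.trans_le hxy
  calc a / x - a / y = a * (y - x) / (x * y) := by field_simp
    _ ≤ x * (y - x) / (x * y) := by gcongr
    _ = 1 - (y / x)⁻¹ := by field_simp
    _ ≤ log (y / x) := one_sub_inv_le_log_of_pos (div_pos hy hx)
    _ = log y - log x := log_div hy.ne' hx.ne'

/-- Discrete partial summation against `sum_primesLE_log_div_le`: along `N` this potential grows
by at most `log log (N + 1) - log log N`. -/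
theorem sum_primesLE_inv_sub_le (N : ℕ) (hN : 2 ≤ N) :
    ∑ p ∈ N.primesLE, 1 / (p : ℝ) - (∑ p ∈ N.primesLE, log p / p - 2) / log N
      ≤ log (log N) + 4 := by
  induction N, hN using Nat.le_induction with
  | base =>
    have h2 : Nat.primesLE 2 = {2} := by decide
    have hl2 : 0.69 < log 2 := by linarith [log_two_gt_d9]
    have hll2 : 1 - 1 / 0.69 ≤ log (log 2) := by
      calc 1 - 1 / 0.69 ≤ 1 - (log 2)⁻¹ := by
            rw [one_div]; gcongr
        _ ≤ log (log 2) := one_sub_inv_le_log_of_pos (by linarith)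
    rw [h2, sum_singleton, sum_singleton]
    have : (1 : ℝ) / 2 - (log 2 / 2 - 2) / log 2 = 2 / log 2 := by field_simp; ring
    push_cast
    rw [this, div_le_iff₀ (by linarith)]
    nlinarith
  | succ n hn ih =>
    set S := ∑ p ∈ n.primesLE, 1 / (p : ℝ)
    set A := ∑ p ∈ n.primesLE, log p / p
    have hl : 0 < log n := log_pos (by exact_mod_cast hn)
    have hll : log n ≤ log (n + 1 : ℕ) := log_le_log (by positivity) (by simp)
    -- a new prime `n + 1` adds `1 / (n + 1)` to both terms of the potential
    have hstep : ∑ p ∈ (n + 1).primesLE, 1 / (p : ℝ)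
        - (∑ p ∈ (n + 1).primesLE, log p / p - 2) / log (n + 1 : ℕ)
          = S - (A - 2) / log (n + 1 : ℕ) := by
      rw [Nat.primesLE_succ]
      have hl₁ : log (n + 1 : ℕ) ≠ 0 := (hl.trans_le hll).ne'
      split_ifs
      · rw [sum_insert (Nat.notMem_primesLE n), sum_insert (Nat.notMem_primesLE n)]
        field_simp
        ring
      · rfl
    rw [hstep]
    have hA : A - 2 ≤ log n := by linarith [sum_primesLE_log_div_le n]
    linarith [div_sub_div_le_log_sub_log hl hll hA]

theorem sum_primesLE_inv_le (N : ℕ) (hN : 2 ≤ N) :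
    ∑ p ∈ N.primesLE, 1 / (p : ℝ) ≤ log (log N) + 5 := by
  have hl : 0 < log N := log_pos (by exact_mod_cast hN)
  have : (∑ p ∈ N.primesLE, log p / p - 2) / log N ≤ 1 := by
    rw [div_le_one hl]; linarith [sum_primesLE_log_div_le N]
  linarith [sum_primesLE_inv_sub_le N hN]

theorem sum_primeFactors_filter_lt_inv_le_one {n T : ℕ} (hn : n ≠ 0) (hT : 2 ≤ T)
    (hnT : log n ≤ T) : ∑ p ∈ n.primeFactors with T < p, 1 / (p : ℝ) ≤ 1 := by
  set t := {p ∈ n.primeFactors | T < p}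
  have hpow : 3 ^ #t ≤ n := calc
    3 ^ #t ≤ ∏ p ∈ t, p := pow_card_le_prod _ _ _ fun p hp ↦ by
      have := (mem_filter.mp hp).2; omega
    _ ≤ ∏ p ∈ n.primeFactors, p := Nat.le_of_dvd (prod_pos fun p hp ↦
        (Nat.prime_of_mem_primeFactors hp).pos) (prod_dvd_prod_of_subset _ _ _ (filter_subset _ _))
    _ ≤ n := Nat.le_of_dvd (Nat.pos_of_ne_zero hn) n.prod_primeFactors_dvd
  have hcard : (#t : ℝ) ≤ T := by
    have hlog3 : 1 ≤ log 3 := by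
      rw [le_log_iff_exp_le (by norm_num)]; linarith [exp_one_lt_d9]
    have : (#t : ℝ) * log 3 ≤ log n := by
      rw [← log_pow]; exact log_le_log (by positivity) (by exact_mod_cast hpow)
    nlinarith
  calc ∑ p ∈ t, 1 / (p : ℝ) ≤ ∑ _p ∈ t, 1 / ((T : ℝ) + 1) := sum_le_sum fun p hp ↦ by
        have := (mem_filter.mp hp).2
        gcongr; exact_mod_cast this
    _ = #t / ((T : ℝ) + 1) := by rw [sum_const, nsmul_eq_mul, mul_one_div]
    _ ≤ 1 := by rw [div_le_one (by positivity)]; linarith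

theorem sum_primeFactors_inv_le {n T : ℕ} (hn : n ≠ 0) (hT : 2 ≤ T) (hnT : log n ≤ T) :
    ∑ p ∈ n.primeFactors, 1 / (p : ℝ) ≤ log (log T) + 6 := by
  rw [← sum_filter_not_add_sum_filter _ (T < ·)]
  have hsmall : ∑ p ∈ n.primeFactors with ¬T < p, 1 / (p : ℝ) ≤ ∑ p ∈ T.primesLE, 1 / (p : ℝ) :=
    sum_le_sum_of_subset_of_nonneg
      (fun p hp ↦ by
        obtain ⟨hp, hpT⟩ := mem_filter.mp hp
        exact Nat.mem_primesLE.mpr ⟨not_lt.mp hpT, Nat.prime_of_mem_primeFactors hp⟩)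
      fun _ _ _ ↦ by positivity
  linarith [sum_primesLE_inv_le T hT, sum_primeFactors_filter_lt_inv_le_one hn hT hnT]

theorem prod_primeFactors_one_add_inv_le {n T : ℕ} (hn : n ≠ 0) (hT : 2 ≤ T) (hnT : log n ≤ T) :
    ∏ p ∈ n.primeFactors, (1 + 1 / (p : ℝ)) ≤ exp 6 * log T := calc
  ∏ p ∈ n.primeFactors, (1 + 1 / (p : ℝ)) ≤ ∏ p ∈ n.primeFactors, exp (1 / (p : ℝ)) :=
      prod_le_prod (fun _ _ ↦ by positivity) fun p _ ↦ by linarith [add_one_le_exp (1 / (p : ℝ))]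
  _ = exp (∑ p ∈ n.primeFactors, 1 / (p : ℝ)) := (exp_sum _ _).symm
  _ ≤ exp (log (log T) + 6) := exp_le_exp.mpr (sum_primeFactors_inv_le hn hT hnT)
  _ = exp 6 * log T := by
      rw [exp_add, exp_log (log_pos (by exact_mod_cast hT)), mul_comm]

theorem prod_primeFactors_natAbs_sub_le {α₁ α₂ m : ℕ} (hm : 2 ≤ m) (h₁ : α₁ < 2 ^ m)
    (h₂ : α₂ < 2 ^ m) (hne : α₁ ≠ α₂) :
    ∏ p ∈ ((α₁ : ℤ) - α₂).natAbs.primeFactors, (1 + 1 / (p : ℝ)) ≤ exp 6 * log m := by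
  have hpos : 0 < ((α₁ : ℤ) - α₂).natAbs := by omega
  have hle : ((α₁ : ℤ) - α₂).natAbs ≤ 2 ^ m := by omega
  refine prod_primeFactors_one_add_inv_le hpos.ne' hm ?_
  calc log ((α₁ : ℤ) - α₂).natAbs ≤ log ((2 : ℝ) ^ m) :=
        log_le_log (by exact_mod_cast hpos) (by exact_mod_cast hle)
    _ = m * log 2 := by rw [log_pow]
    _ ≤ m := mul_le_of_le_one_right (Nat.cast_nonneg m) (by linarith [log_two_lt_d9])

theorem finsum_offDiag_inv_mul_le {S : Set ℕ} {s : Finset ℕ} (hS : S ⊆ s) {g : ℕ × ℕ → ℝ} {M : ℝ}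
    (hM : 0 ≤ M) (hg₀ : ∀ q, 0 ≤ g q) (hgM : ∀ q ∈ s.offDiag, g q ≤ M) :
    ∑ᶠ q ∈ {q : ℕ × ℕ | q.1 ∈ S ∧ q.2 ∈ S ∧ q.1 ≠ q.2}, 1 / ((q.1 : ℝ) * q.2) * g q
      ≤ M * (∑ α ∈ s, 1 / (α : ℝ)) ^ 2 := by
  have hP : {q : ℕ × ℕ | q.1 ∈ S ∧ q.2 ∈ S ∧ q.1 ≠ q.2} ⊆ s.offDiag := fun q ⟨h₁, h₂, hne⟩ ↦
    mem_offDiag.mpr ⟨hS h₁, hS h₂, hne⟩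
  rw [finsum_mem_eq_finite_toFinset_sum _ (s.offDiag.finite_toSet.subset hP)]
  calc _ ≤ ∑ q ∈ s.offDiag, 1 / ((q.1 : ℝ) * q.2) * g q :=
        sum_le_sum_of_subset_of_nonneg (by simpa using hP) fun q _ _ ↦ by
          have := hg₀ q; positivity
    _ ≤ ∑ q ∈ s.offDiag, 1 / ((q.1 : ℝ) * q.2) * M :=
        sum_le_sum fun q hq ↦ mul_le_mul_of_nonneg_left (hgM q hq) (by positivity)
    _ ≤ ∑ q ∈ s ×ˢ s, 1 / ((q.1 : ℝ) * q.2) * M :=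
        sum_le_sum_of_subset_of_nonneg
          (fun _ hq ↦ mem_product.mpr ⟨(mem_offDiag.mp hq).1, (mem_offDiag.mp hq).2.1⟩)
          fun _ _ _ ↦ by positivity
    _ = M * (∑ α ∈ s, 1 / (α : ℝ)) ^ 2 := by
        rw [sq, sum_mul_sum, ← sum_product', mul_sum]
        exact sum_congr rfl fun q _ ↦ by rw [one_div_mul_one_div, mul_comm]

theorem rpow_three_halves {x : ℝ} (hx : 0 < x) : x ^ ((3 : ℝ) / 2) = x * √x := by
  rw [sqrt_eq_rpow, show (3 : ℝ) / 2 = 1 + 1 / 2 by norm_num, rpow_add hx, rpow_one]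

section Dyadic

variable (B : Set ℕ) [DecidablePred (· ∈ B)]

def dyadicPart (k : ℕ) : Finset ℕ := {α ∈ Ico (2 ^ k) (2 ^ (k + 1)) | α ∈ B}

theorem coe_dyadicPart (k : ℕ) :
    (dyadicPart B k : Set ℕ) = B ∩ Set.Ico (2 ^ k) (2 ^ (k + 1)) := by
  ext
  simp only [dyadicPart, coe_filter, mem_Ico, Set.mem_ofPred_eq, Set.mem_inter_iff, Set.mem_Ico]
  tauto

theorem pairwise_disjoint_dyadicPart : Pairwise (Function.onFun Disjoint (dyadicPart B)) := by
  intro k j hkj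
  refine disjoint_left.mpr fun α hk hj ↦ hkj ?_
  simp only [dyadicPart, mem_filter, mem_Ico] at hk hj
  exact (Nat.log_eq_of_pow_le_of_lt_pow hk.1.1 hk.1.2).symm.trans
    (Nat.log_eq_of_pow_le_of_lt_pow hj.1.1 hj.1.2)

theorem sum_inv_dyadicPart_le {k : ℕ} {c : ℝ}
    (h : ((B ∩ Set.Ico (2 ^ k) (2 ^ (k + 1))).ncard : ℝ) ≤ c * 2 ^ k) :
    ∑ α ∈ dyadicPart B k, 1 / (α : ℝ) ≤ c := calc
  ∑ α ∈ dyadicPart B k, 1 / (α : ℝ) ≤ ∑ _α ∈ dyadicPart B k, 1 / (2 ^ k : ℝ) :=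
      sum_le_sum fun α hα ↦ by
        have := (mem_Ico.mp (mem_filter.mp hα).1).1
        gcongr; exact_mod_cast this
  _ = #(dyadicPart B k) / 2 ^ k := by rw [sum_const, nsmul_eq_mul, mul_one_div]
  _ ≤ c := by
      rw [div_le_iff₀ (by positivity)]
      rwa [← coe_dyadicPart, Set.ncard_coe_finset] at h

theorem sum_inv_biUnion_dyadicPart_le {C : ℝ} (hC : 0 ≤ C) {a b : ℕ} (ha : 1 ≤ a)
    (hab : b + 1 ≤ 2 * a)
    (hB : ∀ k : ℕ, 1 ≤ k → ((B ∩ Set.Ico (2 ^ k) (2 ^ (k + 1))).ncard : ℝ)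
      ≤ C * 2 ^ k / (k : ℝ) ^ ((3 : ℝ) / 2)) :
    ∑ α ∈ (Icc a b).biUnion (dyadicPart B), 1 / (α : ℝ) ≤ C / √a := by
  have hterm : ∀ k ∈ Icc a b, ∑ α ∈ dyadicPart B k, 1 / (α : ℝ) ≤ C / (a * √a) := fun k hk ↦ by
    have hak : a ≤ k := (mem_Icc.mp hk).1
    have hk : (0 : ℝ) < k := by exact_mod_cast ha.trans hak
    refine (sum_inv_dyadicPart_le B (c := C / (k * √k)) ?_).trans (by gcongr)
    rw [← rpow_three_halves hk, div_mul_eq_mul_div]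
    exact hB k (ha.trans hak)
  have hcard : (#(Icc a b) : ℝ) ≤ a := by
    rw [Nat.card_Icc]; exact_mod_cast (by omega : b + 1 - a ≤ a)
  rw [sum_biUnion ((pairwise_disjoint_dyadicPart B).set_pairwise _)]
  calc _ ≤ #(Icc a b) * (C / (a * √a)) := by
        rw [← nsmul_eq_mul]; exact sum_le_card_nsmul _ _ _ hterm
    _ ≤ a * (C / (a * √a)) := by gcongr
    _ = C / √a := by field_simp

theorem BX_subset_biUnion_dyadicPart (X : ℝ) :
    BX X B ⊆ ((Icc ⌈2 * log (log X)⌉₊ ⌊3 * log (log X)⌋₊).biUnion (dyadicPart B) : Set ℕ) := by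
  rintro α ⟨hαB, k, hk₁, hk₂, hk₃, hk₄⟩
  simp only [coe_biUnion, Set.mem_iUnion, mem_coe, mem_Icc, dyadicPart, mem_filter, mem_Ico]
  exact ⟨k, ⟨Nat.ceil_le.mpr hk₁, Nat.le_floor hk₂⟩, ⟨hk₃, hk₄⟩, hαB⟩

theorem lt_two_pow_of_mem_biUnion_dyadicPart {a b α : ℕ}
    (h : α ∈ (Icc a b).biUnion (dyadicPart B)) : α < 2 ^ (b + 1) := by
  simp only [mem_biUnion, mem_Icc, dyadicPart, mem_filter, mem_Ico] at h
  obtain ⟨k, ⟨-, hkb⟩, ⟨-, hαk⟩, -⟩ := h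
  exact hαk.trans_le (Nat.pow_le_pow_right two_pos (by omega))

end Dyadic

/-- for a set `B` of primes with `#(B ∩ [2ᵏ,2ᵏ⁺¹)) ≤ C·2ᵏ/k^{3/2}` for all
`k ≥ 1`, the off-diagonal pair sum
`Σ_{α₁ ≠ α₂ ∈ B_X} (1/(α₁α₂))·∏_{p ∣ α₁−α₂} (1 + 1/p)` is
`≤ C'·(log log log X)/(log log X)` for all sufficiently large `X`. -/
theorem stmt_17 (C : ℝ) (hC : 0 < C) :
    ∃ C' : ℝ, 0 < C' ∧ ∃ X₀ : ℝ, Real.exp (Real.exp 1) < X₀ ∧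
      ∀ X : ℝ, X₀ ≤ X → ∀ B : Set ℕ, (∀ q ∈ B, Nat.Prime q) →
        (∀ k : ℕ, 1 ≤ k →
          ((B ∩ Set.Ico (2 ^ k) (2 ^ (k + 1))).ncard : ℝ)
            ≤ C * 2 ^ k / (k : ℝ) ^ ((3 : ℝ) / 2)) →
        (∑ᶠ q ∈ {q : ℕ × ℕ | q.1 ∈ BX X B ∧ q.2 ∈ BX X B ∧ q.1 ≠ q.2},
            (1 / ((q.1 : ℝ) * (q.2 : ℝ))) *
              ∏ p ∈ ((q.1 : ℤ) - (q.2 : ℤ)).natAbs.primeFactors, (1 + 1 / (p : ℝ)))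
          ≤ C' * Real.log (Real.log (Real.log X)) / Real.log (Real.log X) := by
  classical
  refine ⟨exp 6 * C ^ 2, by positivity, exp (exp 4), exp_lt_exp.mpr (exp_lt_exp.mpr (by norm_num)),
    fun X hX B _ hB ↦ ?_⟩
  set L := log (log X)
  have hL : 4 ≤ L := by
    have hlogX : exp 4 ≤ log X := (le_log_iff_exp_le ((exp_pos _).trans_le hX)).mpr hX
    exact (le_log_iff_exp_le ((exp_pos _).trans_le hlogX)).mpr hlogX
  have hlogL : 0 < log L := log_pos (by linarith)
  set a := ⌈2 * L⌉₊
  set b := ⌊3 * L⌋₊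
  have ha : 2 * L ≤ a := Nat.le_ceil _
  have hb : (b : ℝ) ≤ 3 * L := Nat.floor_le (by linarith)
  have ha₁ : 1 ≤ a := by exact_mod_cast (by linarith : (1 : ℝ) ≤ a)
  have hab : b + 1 ≤ 2 * a := by exact_mod_cast (by linarith : (b : ℝ) + 1 ≤ 2 * a)
  have hb₂ : 2 ≤ b + 1 := Nat.succ_le_succ (Nat.le_floor (by norm_num; linarith))
  have hlogb : log (b + 1 : ℕ) ≤ 2 * log L := calc
    log (b + 1 : ℕ) ≤ log (4 * L) := log_le_log (by positivity) (by push_cast; linarith)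
    _ = log 4 + log L := log_mul (by norm_num) (by positivity)
    _ ≤ 2 * log L := by linarith [log_le_log (by norm_num) hL]
  calc _ ≤ exp 6 * log (b + 1 : ℕ) * (∑ α ∈ (Icc a b).biUnion (dyadicPart B), 1 / (α : ℝ)) ^ 2 :=
        finsum_offDiag_inv_mul_le (BX_subset_biUnion_dyadicPart B X) (by positivity)
          (fun _ ↦ prod_nonneg fun _ _ ↦ by positivity) fun q hq ↦ by
            obtain ⟨h₁, h₂, hne⟩ := mem_offDiag.mp hq
            exact prod_primeFactors_natAbs_sub_le hb₂ (lt_two_pow_of_mem_biUnion_dyadicPart B h₁)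
              (lt_two_pow_of_mem_biUnion_dyadicPart B h₂) hne
    _ ≤ exp 6 * (2 * log L) * (C / √a) ^ 2 := by
        have hsum := sum_inv_biUnion_dyadicPart_le B hC.le ha₁ hab hB
        gcongr
    _ = exp 6 * C ^ 2 * (2 * log L) / a := by
        rw [div_pow, sq_sqrt (Nat.cast_nonneg a)]; ring
    _ ≤ exp 6 * C ^ 2 * (2 * log L) / (2 * L) := by gcongr
    _ = exp 6 * C ^ 2 * log L / L := by field_simp
end

section
/- Let (a,b,c,d) be any quadruple of integers and let f(x) = (a+b)x² − (a+b+c−d)x + c. Then for every natural number s, (S₄S₃)ˢ·(a,b,c,d)ᵀ = (a, b, f(2s), f(2s+1))ᵀ. -/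
def apQuadratic (a b c d x : ℤ) : ℤ :=
  (a + b) * x ^ 2 - (a + b + c - d) * x + c

lemma apQuadratic_add_two (a b c d x : ℤ) :
    apQuadratic a b c d (x + 2) =
      2 * (a + b + apQuadratic a b c d (x + 1)) - apQuadratic a b c d x := by
  unfold apQuadratic
  ring

@[simp]
lemma apQuadratic_zero (a b c d : ℤ) : apQuadratic a b c d 0 = c := by
  simp [apQuadratic]

@[simp]
lemma apQuadratic_one (a b c d : ℤ) : apQuadratic a b c d 1 = d := by
  simp only [apQuadratic]
  ring

lemma ApGen_two_mulVec (x y z w : ℤ) :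
    (ApGen 2).mulVec ![x, y, z, w] = ![x, y, 2 * (x + y + w) - z, w] := by
  ext i
  fin_cases i <;> simp [ApGen, Matrix.mulVec, dotProduct, Fin.sum_univ_four]
  ring

lemma ApGen_three_mulVec (x y z w : ℤ) :
    (ApGen 3).mulVec ![x, y, z, w] = ![x, y, z, 2 * (x + y + z) - w] := by
  ext i
  fin_cases i <;> simp [ApGen, Matrix.mulVec, dotProduct, Fin.sum_univ_four]
  ring

lemma ApGen_three_mul_two_mulVec_apQuadratic (a b c d x : ℤ) :
    (ApGen 3 * ApGen 2).mulVec ![a, b, apQuadratic a b c d x, apQuadratic a b c d (x + 1)] =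
      ![a, b, apQuadratic a b c d (x + 2), apQuadratic a b c d (x + 3)] := by
  have h3 : apQuadratic a b c d (x + 3) =
      2 * (a + b + apQuadratic a b c d (x + 2)) - apQuadratic a b c d (x + 1) := by
    unfold apQuadratic
    ring
  rw [← Matrix.mulVec_mulVec, ApGen_two_mulVec, ApGen_three_mulVec, ← apQuadratic_add_two, h3]

/-- for any integer quadruple `(a,b,c,d)` and `f(x) = (a+b)x² − (a+b+c−d)x + c`,
one has `(S₄S₃)ˢ·(a,b,c,d)ᵀ = (a, b, f(2s), f(2s+1))ᵀ` (0-indexed: `S₄ = ApGen 3`,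
`S₃ = ApGen 2`). -/
theorem stmt_18 (a b c d : ℤ) (s : ℕ) :
    ((ApGen 3 * ApGen 2) ^ s).mulVec ![a, b, c, d] =
      ![a, b,
        (a + b) * (2 * (s : ℤ)) ^ 2 - (a + b + c - d) * (2 * (s : ℤ)) + c,
        (a + b) * (2 * (s : ℤ) + 1) ^ 2 - (a + b + c - d) * (2 * (s : ℤ) + 1) + c] := by
  change _ = ![a, b, apQuadratic a b c d (2 * s), apQuadratic a b c d (2 * s + 1)]
  induction s with
  | zero => simp
  | succ n ih =>
    rw [pow_succ', ← Matrix.mulVec_mulVec, ih, ApGen_three_mul_two_mulVec_apQuadratic]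
    push_cast
    ring_nf
end
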